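/- arXiv:1903.08539 — 6 statements merged into one kernel-verified Lean document; each statement's English description precedes it below -/
import Mathlib

section
/- Line splitting theorem: Let L be a complete length metric space satisfying the CBB(0) comparison, and suppose L contains a line, i.e. a map γ : ℝ → L with dist (γ s) (γ t) = |s − t| for all s, t ∈ ℝ. Then L splits off this line isometrically: there exists a subset S ⊆ L such that L is isometric to the ℓ²-product of S and ℝ (formally, there is an isometric equivalence L ≃ᵢ WithLp 2 (S × ℝ), where S carries the subspace metric). -/
/-- Comparison angle (model angle for curvature `0`) at `p` between `x` and `y`. -/
noncomputable def cmpAngle {X : Type*} [MetricSpace X] (p x y : X) : ℝ :=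
  Real.arccos ((dist p x ^ 2 + dist p y ^ 2 - dist x y ^ 2) / (2 * dist p x * dist p y))

/-- The CBB(0) four-point comparison: curvature `≥ 0` in the sense of Alexandrov. -/
def CBB0Cmp (X : Type*) [MetricSpace X] : Prop :=
  ∀ p x₁ x₂ x₃ : X, p ≠ x₁ → p ≠ x₂ → p ≠ x₃ →
    cmpAngle p x₁ x₂ + cmpAngle p x₂ x₃ + cmpAngle p x₃ x₁ ≤ 2 * Real.pi

/-- The CAT(0) four-point comparison. -/
def CAT0Cmp (X : Type*) [MetricSpace X] : Prop :=
  ∀ p₁ p₂ x₁ x₂ : X, p₁ ≠ p₂ → p₁ ≠ x₁ → p₁ ≠ x₂ → p₂ ≠ x₁ → p₂ ≠ x₂ →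
    cmpAngle p₁ x₁ x₂ ≤ cmpAngle p₁ p₂ x₁ + cmpAngle p₁ p₂ x₂ ∨
    cmpAngle p₂ x₁ x₂ ≤ cmpAngle p₂ p₁ x₁ + cmpAngle p₂ p₁ x₂

/-- Midpoint characterization of the length condition (for complete spaces). -/
def LengthMid (X : Type*) [MetricSpace X] : Prop :=
  ∀ x y : X, ∀ ε : ℝ, 0 < ε → ∃ z : X,
    dist x z ≤ dist x y / 2 + ε ∧ dist z y ≤ dist x y / 2 + ε

/-- A geodesic from `p` to `q`, affinely parametrized by `[0,1]`. -/
def IsGeodesicP {X : Type*} [MetricSpace X] (γ : ℝ → X) (p q : X) : Prop :=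
  γ 0 = p ∧ γ 1 = q ∧
    ∀ s ∈ Set.Icc (0:ℝ) 1, ∀ t ∈ Set.Icc (0:ℝ) 1, dist (γ s) (γ t) = |s - t| * dist p q

/-- A metrically convex subset: together with any two points it contains
every point lying between them. -/
def MConvexSet {X : Type*} [MetricSpace X] (K : Set X) : Prop :=
  ∀ x ∈ K, ∀ y ∈ K, ∀ z : X, dist x z + dist z y = dist x y → z ∈ K

/-!
The Busemann function `b` of the line is `1`-Lipschitz, and the curvature bound forces the
Busemann function of the opposite end to be `-b`. Letting the fourth point of the comparison run
off along the line shows that comparison angles at a point satisfy a triangle inequality through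
the direction of the end. Two consequences follow. First, moving a point `w` along a gradient line
of `b` (so that `|b c - b w| = dist c w`) preserves `dist p w ^ 2 - (b p - b w) ^ 2` for every `p`.
Second, points that are approximately at distance `t` from `q` towards the end are close to each
other, so by completeness and the midpoint property such gradient lines exist through every point.
Flowing each point along its gradient line to the level set `b = 0` is the first factor of the
splitting `L ≃ {b = 0} × ℝ`, and `b` itself is the second.
-/

open Filter Topology Real

section LineSplitting

variable {L : Type*} [MetricSpace L] {γ : ℝ → L}

lemma cmpAngle_comm (p x y : L) : cmpAngle p x y = cmpAngle p y x := by
  unfold cmpAngle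
  rw [dist_comm x y]
  ring_nf

lemma cmpAngle_nonneg (p x y : L) : 0 ≤ cmpAngle p x y := arccos_nonneg _

lemma law_cos_cmpAngle (p x y : L) :
    dist x y ^ 2 =
      dist p x ^ 2 + dist p y ^ 2 - 2 * dist p x * dist p y * cos (cmpAngle p x y) := by
  rcases eq_or_ne p x with rfl | hx
  · simp
  rcases eq_or_ne p y with rfl | hy
  · simp [dist_comm]
  have ha := dist_pos.2 hx
  have hc := dist_pos.2 hy
  have hxy := dist_triangle_left x y p
  have hpx := dist_triangle p y x
  have hpy := dist_triangle p x y
  rw [dist_comm y x] at hpx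
  rw [cmpAngle, cos_arccos]
  · field_simp
    ring
  · rw [le_div_iff₀ (by positivity)]
    nlinarith [dist_nonneg (x := x) (y := y)]
  · rw [div_le_one (by positivity)]
    nlinarith

/-- The two comparison angles that a point `q` makes at `p` with the two halves of a geodesic
`x p y` add up to at most `π`; in expanded form: -/
lemma CBB0Cmp.dist_sq_le_of_dist_eq_add (hcbb : CBB0Cmp L) {p x y : L} (hx : p ≠ x) (hy : p ≠ y)
    (hxy : dist x y = dist p x + dist p y) (q : L) :
    dist p y * dist x q ^ 2 + dist p x * dist q y ^ 2 ≤
      (dist p x + dist p y) * (dist p q ^ 2 + dist p x * dist p y) := by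
  rcases eq_or_ne p q with rfl | hq
  · simp only [dist_self, dist_comm x p]
    nlinarith
  have ha := dist_pos.2 hx
  have hc := dist_pos.2 hy
  have hπ : cmpAngle p y x = π := by
    rw [cmpAngle, dist_comm y x, hxy,
      show (dist p y ^ 2 + dist p x ^ 2 - (dist p x + dist p y) ^ 2) /
        (2 * dist p y * dist p x) = -1 by field_simp; ring, arccos_neg_one]
  have hsum := hcbb p x q y hx hq hy
  have hcos := cos_le_cos_of_nonneg_of_le_pi (cmpAngle_nonneg p x q)
    (by linarith [cmpAngle_nonneg p q y]) (show cmpAngle p x q ≤ π - cmpAngle p q y by linarith)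
  rw [cos_pi_sub] at hcos
  have h := mul_nonneg (by positivity : 0 ≤ dist p x * dist p y * dist p q)
    (neg_le_iff_add_nonneg.1 hcos)
  rw [law_cos_cmpAngle p x q, law_cos_cmpAngle p q y]
  nlinarith [h]

noncomputable def busemann (γ : ℝ → L) (q : L) : ℝ := ⨅ t : ℝ, (dist q (γ t) - t)

lemma neg_dist_le_dist_line_sub (hγ : Isometry γ) (q : L) (t : ℝ) :
    -dist q (γ 0) ≤ dist q (γ t) - t := by
  have h := dist_triangle_left (γ 0) (γ t) q
  rw [hγ.dist_eq, Real.dist_eq, zero_sub, abs_neg] at h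
  linarith [le_abs_self t]

lemma antitone_dist_line_sub (hγ : Isometry γ) (q : L) :
    Antitone fun t => dist q (γ t) - t := by
  intro s t hst
  have h := dist_triangle q (γ s) (γ t)
  rw [hγ.dist_eq, Real.dist_eq, abs_sub_comm, abs_of_nonneg (sub_nonneg.2 hst)] at h
  linarith

lemma bddBelow_range_dist_line_sub (hγ : Isometry γ) (q : L) :
    BddBelow (Set.range fun t => dist q (γ t) - t) :=
  ⟨-dist q (γ 0), by rintro _ ⟨t, rfl⟩; exact neg_dist_le_dist_line_sub hγ q t⟩

lemma busemann_le (hγ : Isometry γ) (q : L) (t : ℝ) : busemann γ q ≤ dist q (γ t) - t :=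
  ciInf_le (bddBelow_range_dist_line_sub hγ q) t

lemma le_busemann {q : L} {c : ℝ} (h : ∀ t, c ≤ dist q (γ t) - t) : c ≤ busemann γ q :=
  le_ciInf h

lemma tendsto_busemann (hγ : Isometry γ) (q : L) :
    Tendsto (fun t => dist q (γ t) - t) atTop (𝓝 (busemann γ q)) :=
  tendsto_atTop_ciInf (antitone_dist_line_sub hγ q) (bddBelow_range_dist_line_sub hγ q)

lemma tendsto_dist_line_atTop (hγ : Isometry γ) (q : L) :
    Tendsto (fun t => dist q (γ t)) atTop atTop :=
  tendsto_atTop_mono (f := fun t => t + -dist q (γ 0))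
    (fun t => by linarith [neg_dist_le_dist_line_sub hγ q t])
    (tendsto_atTop_add_const_right _ _ tendsto_id)

lemma lipschitzWith_busemann (hγ : Isometry γ) : LipschitzWith 1 (busemann γ) :=
  LipschitzWith.of_le_add fun p q => by
    have h : busemann γ p - dist p q ≤ busemann γ q := le_busemann fun t => by
      linarith [busemann_le hγ p t, dist_triangle p q (γ t)]
    linarith

lemma abs_busemann_sub_le (hγ : Isometry γ) (p q : L) :
    |busemann γ p - busemann γ q| ≤ dist p q := by
  simpa [Real.dist_eq] using (lipschitzWith_busemann hγ).dist_le_mul p q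

lemma CBB0Cmp.dist_sq_add_dist_sq_le_line (hcbb : CBB0Cmp L) (hγ : Isometry γ) (q : L) {r : ℝ}
    (hr : 0 < r) :
    dist q (γ (-r)) ^ 2 + dist q (γ r) ^ 2 ≤ 2 * dist q (γ 0) ^ 2 + 2 * r ^ 2 := by
  have h₁ : dist (γ 0) (γ (-r)) = r := by
    rw [hγ.dist_eq, Real.dist_eq, zero_sub, neg_neg, abs_of_pos hr]
  have h₂ : dist (γ 0) (γ r) = r := by
    rw [hγ.dist_eq, Real.dist_eq, zero_sub, abs_neg, abs_of_pos hr]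
  have h₃ : dist (γ (-r)) (γ r) = r + r := by
    rw [hγ.dist_eq, Real.dist_eq, abs_of_neg (by linarith)]
    ring
  have h := hcbb.dist_sq_le_of_dist_eq_add (p := γ 0) (x := γ (-r)) (y := γ r)
    (hγ.injective.ne (by linarith)) (hγ.injective.ne (by linarith)) (by rw [h₁, h₂, h₃]) q
  rw [h₁, h₂, dist_comm (γ 0) q, dist_comm (γ (-r)) q] at h
  nlinarith

lemma CBB0Cmp.busemann_reverse (hcbb : CBB0Cmp L) (hγ : Isometry γ) (q : L) :
    busemann (fun u => γ (-u)) q = -busemann γ q := by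
  refine le_antisymm ?_ (le_busemann fun s => ?_)
  · have hle : ∀ r > 0,
        busemann γ q + busemann (fun u => γ (-u)) q ≤ dist q (γ 0) ^ 2 / r :=
      fun r hr => by
        have h₁ := busemann_le hγ q r
        have h₂ : busemann (fun u => γ (-u)) q ≤ dist q (γ (-r)) - r :=
          busemann_le (hγ.comp isometry_neg) q r
        rw [le_div_iff₀ hr]
        -- with `a, b` the two differences bounding the Busemann values, concavity reads
        -- `2 r (a + b) ≤ 2 dist q (γ 0) ^ 2 - a ^ 2 - b ^ 2`
        nlinarith [hcbb.dist_sq_add_dist_sq_le_line hγ q hr, sq_nonneg (dist q (γ r) - r),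
          sq_nonneg (dist q (γ (-r)) - r)]
    have := ge_of_tendsto (tendsto_const_nhds.div_atTop tendsto_id)
      ((eventually_gt_atTop (0 : ℝ)).mono hle)
    linarith
  · have : s - dist q (γ (-s)) ≤ busemann γ q := le_busemann fun t => by
      have h := dist_triangle (γ t) q (γ (-s))
      rw [hγ.dist_eq, Real.dist_eq, dist_comm (γ t)] at h
      linarith [le_abs_self (t - -s)]
    linarith

/-- The comparison angle at `u` between `v` and the end `γ (+∞)`. -/
noncomputable def lineAngle (γ : ℝ → L) (u v : L) : ℝ :=
  arccos ((busemann γ u - busemann γ v) / dist u v)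

lemma cos_lineAngle (hγ : Isometry γ) (u v : L) :
    cos (lineAngle γ u v) = (busemann γ u - busemann γ v) / dist u v := by
  have h : |(busemann γ u - busemann γ v) / dist u v| ≤ 1 := by
    rw [abs_div, abs_of_nonneg dist_nonneg]
    exact div_le_one_of_le₀ (abs_busemann_sub_le hγ u v) dist_nonneg
  exact cos_arccos (abs_le.1 h).1 (abs_le.1 h).2

lemma tendsto_cmpAngle_line (hγ : Isometry γ) {u v : L} (huv : u ≠ v) :
    Tendsto (fun R => cmpAngle u v (γ R)) atTop (𝓝 (lineAngle γ u v)) := by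
  have ha : dist u v ≠ 0 := dist_ne_zero.2 huv
  have hinv : Tendsto (fun R => (dist u (γ R))⁻¹) atTop (𝓝 0) :=
    (tendsto_dist_line_atTop hγ u).inv_tendsto_atTop
  have hδ : Tendsto (fun R => dist u (γ R) - dist v (γ R)) atTop
      (𝓝 (busemann γ u - busemann γ v)) := by
    simpa using (tendsto_busemann hγ u).sub (tendsto_busemann hγ v)
  have hratio : Tendsto (fun R => (dist u v ^ 2 + dist u (γ R) ^ 2 - dist v (γ R) ^ 2) /
      (2 * dist u v * dist u (γ R))) atTop
      (𝓝 ((busemann γ u - busemann γ v) / dist u v)) := by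
    have hlim := ((tendsto_const_nhds (x := dist u v / 2)).mul hinv).add
      ((hδ.div_const (dist u v)).mul ((tendsto_const_nhds (x := (1 : ℝ))).sub
        ((hδ.div_const 2).mul hinv)))
    rw [mul_zero, zero_add, mul_zero, sub_zero, mul_one] at hlim
    refine hlim.congr' ?_
    filter_upwards [(tendsto_dist_line_atTop hγ u).eventually_gt_atTop 0] with R hR
    field_simp
    ring
  exact (continuous_arccos.tendsto _).comp hratio

lemma CBB0Cmp.lineAngle_reverse (hcbb : CBB0Cmp L) (hγ : Isometry γ) (u v : L) :
    lineAngle (fun t => γ (-t)) u v = π - lineAngle γ u v := by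
  rw [lineAngle, hcbb.busemann_reverse hγ, hcbb.busemann_reverse hγ, lineAngle, ← arccos_neg,
    neg_sub_neg, ← neg_sub, neg_div]

/-- The four-point comparison at `u` with fourth point `γ (-R)`, in the limit `R → ∞`. -/
lemma CBB0Cmp.cmpAngle_le_lineAngle_add (hcbb : CBB0Cmp L) (hγ : Isometry γ) {u v w : L}
    (hv : u ≠ v) (hw : u ≠ w) : cmpAngle u v w ≤ lineAngle γ u v + lineAngle γ u w := by
  have hγ' : Isometry fun t => γ (-t) := hγ.comp isometry_neg
  have hlim := (tendsto_cmpAngle_line hγ' hv).add (tendsto_cmpAngle_line hγ' hw)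
  rw [hcbb.lineAngle_reverse hγ, hcbb.lineAngle_reverse hγ] at hlim
  have hle := le_of_tendsto (b := 2 * π) ((tendsto_const_nhds (x := cmpAngle u v w)).add hlim) <|
    by
    filter_upwards [(tendsto_dist_line_atTop hγ' u).eventually_gt_atTop 0] with R hR
    have h := hcbb u v w (γ (-R)) hv hw (dist_pos.1 hR)
    rw [cmpAngle_comm u (γ (-R)) v] at h
    linarith
  linarith

/-- For `f = busemann γ` this is the squared distance between the projections of `p` and `q`
to a level set of `f`. -/
def perpDistSq (f : L → ℝ) (p q : L) : ℝ := dist p q ^ 2 - (f p - f q) ^ 2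

lemma perpDistSq_comm (f : L → ℝ) (p q : L) : perpDistSq f p q = perpDistSq f q p := by
  rw [perpDistSq, perpDistSq, dist_comm]
  ring

lemma perpDistSq_neg (f : L → ℝ) : perpDistSq (fun x => -f x) = perpDistSq f := by
  funext p q
  rw [perpDistSq, perpDistSq]
  ring

lemma CBB0Cmp.perpDistSq_busemann_le (hcbb : CBB0Cmp L) (hγ : Isometry γ) {c w : L}
    (h : busemann γ c - busemann γ w = dist c w) (p : L) :
    perpDistSq (busemann γ) p w ≤ perpDistSq (busemann γ) p c := by
  rcases eq_or_ne c w with rfl | hcw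
  · exact le_rfl
  have hw : busemann γ w = busemann γ c - dist c w := by linarith
  rcases eq_or_ne c p with rfl | hcp
  · simp [perpDistSq, hw]
  have hang := hcbb.cmpAngle_le_lineAngle_add hγ hcp hcw
  rw [show lineAngle γ c w = 0 by rw [lineAngle, h, div_self (dist_ne_zero.2 hcw), arccos_one],
    add_zero] at hang
  have hcos : cos (lineAngle γ c p) ≤ cos (cmpAngle c p w) :=
    cos_le_cos_of_nonneg_of_le_pi (cmpAngle_nonneg c p w) (arccos_le_pi _) hang
  rw [cos_lineAngle hγ, div_le_iff₀' (dist_pos.2 hcp)] at hcos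
  rw [perpDistSq, perpDistSq, hw, law_cos_cmpAngle c p w, dist_comm p c]
  nlinarith [mul_le_mul_of_nonneg_left hcos (dist_nonneg : 0 ≤ dist c w)]

lemma CBB0Cmp.perpDistSq_busemann_eq (hcbb : CBB0Cmp L) (hγ : Isometry γ) {c w : L}
    (h : |busemann γ c - busemann γ w| = dist c w) (p : L) :
    perpDistSq (busemann γ) p w = perpDistSq (busemann γ) p c := by
  have hle : ∀ {c w : L}, |busemann γ c - busemann γ w| = dist c w →
      perpDistSq (busemann γ) p w ≤ perpDistSq (busemann γ) p c := by
    intro c w h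
    rcases abs_choice (busemann γ c - busemann γ w) with h' | h' <;> rw [h'] at h
    · exact hcbb.perpDistSq_busemann_le hγ h p
    · have hrev := funext (hcbb.busemann_reverse hγ)
      have := hcbb.perpDistSq_busemann_le (γ := fun u => γ (-u)) (hγ.comp isometry_neg)
        (c := c) (w := w) (by rw [hrev]; linarith) p
      rwa [hrev, perpDistSq_neg] at this
  exact le_antisymm (hle h) (hle (by rwa [abs_sub_comm, dist_comm]))

lemma LengthMid.exists_dist_le_add_div_pow (hlen : LengthMid L) (n : ℕ) :
    ∀ {η : ℝ}, 0 < η → ∀ (x y : L) {t : ℝ}, 0 ≤ t → t ≤ dist x y → ∃ z,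
      dist x z ≤ t + η + dist x y / 2 ^ n ∧
        dist z y ≤ dist x y - t + η + dist x y / 2 ^ n := by
  induction n with
  | zero =>
    intro η hη x y t ht htD
    exact ⟨x, by simp; linarith, by simp; linarith⟩
  | succ n ih =>
    intro η hη x y t ht htD
    obtain ⟨m, hxm, hmy⟩ := hlen x y (η / 6) (by positivity)
    have hhalf : ∀ {d : ℝ}, d ≤ dist x y / 2 + η / 6 →
        d / 2 ^ n ≤ dist x y / 2 ^ (n + 1) + η / 6 := fun {d} hd => by
      calc d / 2 ^ n ≤ (dist x y / 2 + η / 6) / 2 ^ n := by gcongr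
        _ = dist x y / 2 ^ (n + 1) + η / 6 / 2 ^ n := by rw [add_div, pow_succ']; ring
        _ ≤ dist x y / 2 ^ (n + 1) + η / 6 := by
          have := div_le_self (by positivity : 0 ≤ η / 6) (one_le_pow₀ (n := n) one_le_two)
          linarith
    have hxm' := hhalf hxm
    have hmy' := hhalf hmy
    have hxy := dist_triangle x m y
    by_cases hcase : t ≤ dist x m
    · obtain ⟨z, hxz, hzm⟩ := ih (half_pos hη) x m ht hcase
      exact ⟨z, by linarith, by linarith [dist_triangle z m y]⟩
    · obtain ⟨z, hmz, hzy⟩ := ih (half_pos hη) m y (t := t - dist x m) (by linarith)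
        (by linarith)
      exact ⟨z, by linarith [dist_triangle x m z], by linarith⟩

lemma LengthMid.exists_dist_le_add (hlen : LengthMid L) {η : ℝ} (hη : 0 < η) (x y : L)
    {t : ℝ} (ht : 0 ≤ t) (htD : t ≤ dist x y) :
    ∃ z, dist x z ≤ t + η ∧ dist z y ≤ dist x y - t + η := by
  obtain ⟨n, hn⟩ := pow_unbounded_of_one_lt (2 * dist x y / η) one_lt_two
  have hsmall : dist x y / 2 ^ n ≤ η / 2 := by
    rw [div_lt_iff₀ hη] at hn
    rw [div_le_iff₀ (by positivity)]
    linarith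
  obtain ⟨z, h₁, h₂⟩ := hlen.exists_dist_le_add_div_pow n (half_pos hη) x y ht htD
  exact ⟨z, by linarith, by linarith⟩

/-- `x` lies at distance `t` from `q` on the ray from `q` towards `γ (+∞)`, up to an error `η`
in each of the two defining conditions. -/
def IsApproxRayPoint (γ : ℝ → L) (q : L) (t η : ℝ) (x : L) : Prop :=
  dist q x ≤ t + η ∧ busemann γ x ≤ busemann γ q - t + η

lemma IsApproxRayPoint.mono {q x : L} {t η η' : ℝ} (h : IsApproxRayPoint γ q t η x)
    (hη : η ≤ η') : IsApproxRayPoint γ q t η' x :=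
  ⟨by linarith [h.1], by linarith [h.2]⟩

lemma isClosed_setOf_isApproxRayPoint (hγ : Isometry γ) (q : L) (t η : ℝ) :
    IsClosed {x | IsApproxRayPoint γ q t η x} :=
  (isClosed_le (continuous_const.dist continuous_id) continuous_const).inter
    (isClosed_le (lipschitzWith_busemann hγ).continuous continuous_const)

lemma CBB0Cmp.one_sub_four_mul_le_cos_cmpAngle (hcbb : CBB0Cmp L) (hγ : Isometry γ)
    {u v w : L} (hv : u ≠ v) (hw : u ≠ w) {δ : ℝ} (hδ₀ : 0 ≤ δ) (hδ₁ : δ ≤ 1)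
    (hvδ : (1 - δ) * dist u v ≤ busemann γ u - busemann γ v)
    (hwδ : (1 - δ) * dist u w ≤ busemann γ u - busemann γ w) :
    1 - 4 * δ ≤ cos (cmpAngle u v w) := by
  have hle : ∀ {x}, u ≠ x → (1 - δ) * dist u x ≤ busemann γ u - busemann γ x →
      lineAngle γ u x ≤ arccos (1 - δ) := fun {x} hx h =>
    arccos_le_arccos (by rwa [le_div_iff₀ (dist_pos.2 hx)])
  have hang := (hcbb.cmpAngle_le_lineAngle_add hγ hv hw).trans
    (add_le_add (hle hv hvδ) (hle hw hwδ))
  have hπ : arccos (1 - δ) + arccos (1 - δ) ≤ π := by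
    linarith [arccos_le_pi_div_two.2 (by linarith : 0 ≤ 1 - δ)]
  have hcos := cos_le_cos_of_nonneg_of_le_pi (cmpAngle_nonneg u v w) hπ hang
  rw [← two_mul, cos_two_mul, cos_arccos (by linarith) (by linarith)] at hcos
  nlinarith

/-- Their directions at `q` are both close to that of `γ (+∞)`. -/
lemma CBB0Cmp.dist_sq_le_of_isApproxRayPoint (hcbb : CBB0Cmp L) (hγ : Isometry γ)
    {q z z' : L} {t η : ℝ} (ht : 0 < t) (hη : η ≤ t / 4) (hz : IsApproxRayPoint γ q t η z)
    (hz' : IsApproxRayPoint γ q t η z') : dist z z' ^ 2 ≤ 26 * t * η := by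
  have hlower : ∀ {x}, IsApproxRayPoint γ q t η x → t - η ≤ dist q x := fun {x} hx => by
    linarith [hx.2, (abs_le.1 (abs_busemann_sub_le hγ q x)).2]
  have hη₀ : 0 ≤ η := by linarith [hlower hz, hz.1]
  set δ := 2 * η / t with hδ
  have hδt : δ * t = 2 * η := div_mul_cancel₀ _ ht.ne'
  have hδ₀ : 0 ≤ δ := by positivity
  have hdir : ∀ {x}, IsApproxRayPoint γ q t η x →
      (1 - δ) * dist q x ≤ busemann γ q - busemann γ x := fun hx => by
    nlinarith [hx.1, hx.2, mul_nonneg hδ₀ hη₀]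
  have hne : ∀ {x}, IsApproxRayPoint γ q t η x → q ≠ x := fun hx =>
    dist_pos.1 (by linarith [hlower hx])
  have hcos := hcbb.one_sub_four_mul_le_cos_cmpAngle hγ (hne hz) (hne hz') hδ₀
    (by nlinarith) (hdir hz) (hdir hz')
  have hc := hlower hz
  have hc' := hlower hz'
  have hcc' : dist q z * dist q z' ≤ (t + η) ^ 2 := by
    rw [sq]
    exact mul_le_mul hz.1 hz'.1 dist_nonneg (by linarith)
  have hdiff : (dist q z - dist q z') ^ 2 ≤ (2 * η) ^ 2 :=
    sq_le_sq' (by linarith [hz.1, hz'.1]) (by linarith [hz.1, hz'.1])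
  have hcos' := mul_le_mul_of_nonneg_left hcos
    (by positivity : 0 ≤ 2 * dist q z * dist q z')
  have hδc : dist q z * dist q z' * δ ≤ 25 / 8 * t * η := by
    have h5 : (t + η) ^ 2 ≤ (5 / 4 * t) ^ 2 := pow_le_pow_left₀ (by linarith) (by linarith) 2
    nlinarith [mul_le_mul_of_nonneg_right (hcc'.trans h5) hδ₀]
  rw [law_cos_cmpAngle q z z']
  nlinarith

lemma LengthMid.exists_isApproxRayPoint (hlen : LengthMid L) (hγ : Isometry γ) (q : L)
    {t η : ℝ} (ht : 0 ≤ t) (hη : 0 < η) : ∃ x, IsApproxRayPoint γ q t η x := by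
  obtain ⟨T, hT, htT⟩ := (((tendsto_busemann hγ q).eventually
    (gt_mem_nhds (lt_add_of_pos_right _ (half_pos hη)))).and
    ((tendsto_dist_line_atTop hγ q).eventually_ge_atTop t)).exists
  obtain ⟨x, hqx, hxT⟩ := hlen.exists_dist_le_add (half_pos hη) q (γ T) ht htT
  exact ⟨x, by linarith, by linarith [busemann_le hγ x T]⟩

lemma CBB0Cmp.exists_isApproxRayPoint_zero [CompleteSpace L] (hcbb : CBB0Cmp L)
    (hlen : LengthMid L) (hγ : Isometry γ) (q : L) {t : ℝ} (ht : 0 ≤ t) :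
    ∃ x, IsApproxRayPoint γ q t 0 x := by
  rcases ht.eq_or_lt with rfl | ht
  · exact ⟨q, by simp [IsApproxRayPoint]⟩
  choose z hz using fun n : ℕ =>
    hlen.exists_isApproxRayPoint hγ q ht.le (Nat.one_div_pos_of_nat (n := n))
  have hev : ∀ η > 0, ∀ᶠ n in atTop, IsApproxRayPoint γ q t η (z n) := fun η hη =>
    (tendsto_one_div_add_atTop_nhds_zero_nat.eventually (gt_mem_nhds hη)).mono fun n hn =>
      (hz n).mono hn.le
  have hcauchy : CauchySeq z := by
    rw [Metric.cauchySeq_iff]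
    intro ε hε
    obtain ⟨N, hN⟩ := eventually_atTop.1
      (hev (min (t / 4) (ε ^ 2 / (27 * t))) (by positivity))
    refine ⟨N, fun m hm n hn => lt_of_pow_lt_pow_left₀ 2 hε.le ?_⟩
    calc dist (z m) (z n) ^ 2 ≤ 26 * t * min (t / 4) (ε ^ 2 / (27 * t)) :=
          hcbb.dist_sq_le_of_isApproxRayPoint hγ ht (min_le_left _ _) (hN m hm) (hN n hn)
      _ ≤ 26 * t * (ε ^ 2 / (27 * t)) := by gcongr; exact min_le_right _ _
      _ < ε ^ 2 := by
        rw [mul_div_assoc', div_lt_iff₀ (by positivity)]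
        nlinarith [pow_pos hε 2]
  obtain ⟨x, hx⟩ := cauchySeq_tendsto_of_complete hcauchy
  have happrox : ∀ η > 0, IsApproxRayPoint γ q t η x := fun η hη =>
    (isClosed_setOf_isApproxRayPoint hγ q t η).mem_of_tendsto hx (hev η hη)
  exact ⟨x, by simpa using le_of_forall_pos_le_add fun η hη => (happrox η hη).1,
    le_of_forall_pos_le_add fun η hη => by linarith [(happrox η hη).2]⟩

lemma CBB0Cmp.exists_busemann_eq_sub [CompleteSpace L] (hcbb : CBB0Cmp L) (hlen : LengthMid L)
    (hγ : Isometry γ) (q : L) (t : ℝ) :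
    ∃ x, busemann γ x = busemann γ q - t ∧ |busemann γ q - busemann γ x| = dist q x := by
  suffices ∃ x, busemann γ x = busemann γ q - t ∧ dist q x ≤ |t| by
    obtain ⟨x, hb, hd⟩ := this
    refine ⟨x, hb, le_antisymm (abs_busemann_sub_le hγ q x) ?_⟩
    rwa [hb, sub_sub_cancel]
  rcases le_total 0 t with ht | ht
  · obtain ⟨x, hqx, hbx⟩ := hcbb.exists_isApproxRayPoint_zero hlen hγ q ht
    refine ⟨x, le_antisymm (by linarith) ?_, by rw [abs_of_nonneg ht]; linarith⟩
    linarith [(abs_le.1 (abs_busemann_sub_le hγ q x)).2]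
  · obtain ⟨x, hqx, hbx⟩ := hcbb.exists_isApproxRayPoint_zero (γ := fun u => γ (-u)) hlen
      (hγ.comp isometry_neg) q (neg_nonneg.2 ht)
    rw [hcbb.busemann_reverse hγ, hcbb.busemann_reverse hγ] at hbx
    refine ⟨x, le_antisymm ?_ (by linarith), by rw [abs_of_nonpos ht]; linarith⟩
    linarith [(abs_le.1 (abs_busemann_sub_le hγ q x)).1]

lemma WithLp.prod_dist_eq_sqrt {α β : Type*} [PseudoMetricSpace α] [PseudoMetricSpace β]
    (f g : WithLp 2 (α × β)) : dist f g = √(dist f.fst g.fst ^ 2 + dist f.snd g.snd ^ 2) := by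
  rw [WithLp.prod_dist_eq_add (by norm_num), Real.sqrt_eq_rpow]
  norm_num

lemma nonempty_isometryEquiv_of_perpDistSq_eq {f : L → ℝ} (Φ : L → ℝ → L)
    (hΦ : ∀ q t, f (Φ q t) = f q - t)
    (hperp : ∀ p q t, perpDistSq f p (Φ q t) = perpDistSq f p q) :
    Nonempty (L ≃ᵢ WithLp 2 ({x | f x = 0} × ℝ)) := by
  have hπ : ∀ p, f (Φ p (f p)) = 0 := fun p => by rw [hΦ, sub_self]
  have hdist : ∀ p q, dist (Φ p (f p)) (Φ q (f q)) ^ 2 + (f p - f q) ^ 2 = dist p q ^ 2 := by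
    intro p q
    have h : perpDistSq f (Φ p (f p)) (Φ q (f q)) = perpDistSq f p q := by
      rw [hperp, perpDistSq_comm, hperp, perpDistSq_comm]
    rw [perpDistSq, perpDistSq, hπ, hπ] at h
    linarith
  let F : L → WithLp 2 ({x | f x = 0} × ℝ) := fun p =>
    WithLp.toLp 2 (⟨Φ p (f p), hπ p⟩, f p)
  have hF : Isometry F := Isometry.of_dist_eq fun p q => by
    rw [WithLp.prod_dist_eq_sqrt, ← Real.sqrt_sq (dist_nonneg (x := p) (y := q)), ← hdist p q,
      Real.dist_eq, sq_abs]
    rfl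
  have hsurj : Function.Surjective F := by
    rintro ⟨⟨σ, hσ⟩, u⟩
    have hu : f (Φ σ (-u)) = u := by rw [hΦ, hσ.out]; ring
    refine ⟨Φ σ (-u), ?_⟩
    have h := (hperp σ (Φ σ (-u)) (f (Φ σ (-u)))).trans (hperp σ σ (-u))
    rw [perpDistSq, perpDistSq, hπ, hσ.out, dist_self, sub_self] at h
    have hσ' : Φ (Φ σ (-u)) (f (Φ σ (-u))) = σ :=
      (dist_eq_zero.1 (pow_eq_zero_iff two_ne_zero |>.1 (by linarith))).symm
    rw [hu] at hσ'
    simp only [F, hu, hσ']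
  exact ⟨{ toEquiv := Equiv.ofBijective F ⟨hF.injective, hsurj⟩, isometry_toFun := hF }⟩

end LineSplitting

theorem line_splitting {L : Type*} [MetricSpace L] [CompleteSpace L]
    (hlen : LengthMid L) (hcbb : CBB0Cmp L)
    (γ : ℝ → L) (hline : ∀ s t : ℝ, dist (γ s) (γ t) = |s - t|) :
    ∃ S : Set L, Nonempty (L ≃ᵢ WithLp 2 (S × ℝ)) := by
  have hγ : Isometry γ := Isometry.of_dist_eq fun s t => by rw [hline, Real.dist_eq]
  choose Φ hΦ hgrad using hcbb.exists_busemann_eq_sub hlen hγ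
  exact ⟨_, nonempty_isometryEquiv_of_perpDistSq_eq Φ hΦ
    fun p q t => hcbb.perpDistSq_busemann_eq hγ (hgrad q t) p⟩
end

section
/- Helly's theorem for CAT(0) spaces: Let U be a complete length metric space satisfying the CAT(0) comparison, and let (K_α)_{α ∈ ι} be an arbitrary family of closed, bounded, convex subsets of U. If ⋂_{α ∈ ι} K_α = ∅, then there is a finite subfamily α₁, …, α_n ∈ ι with K_{α₁} ∩ … ∩ K_{α_n} = ∅ (equivalently: if every finite subfamily has a common point, then the whole family has a common point). -/
/-!
Apply the four-point comparison to `y, z`, an approximate midpoint `m` of them, and any `x`: the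
comparison angle at `y` (or at `z`) between `z` and `m` is small, so the comparison forces the
Bruhat–Tits CN inequality `d(x,m)² ≤ d(x,y)²/2 + d(x,z)²/2 - d(y,z)²/4` up to a small error.
Taking `x` to be another approximate midpoint shows that approximate midpoints form a Cauchy
sequence, so by completeness every pair of points has a midpoint satisfying the CN inequality.

With such midpoints, two approximately nearest points to `p` in a convex set are close to each
other. If all finite intersections of the `K α` were nonempty, the approximately nearest points
to a fixed `p` in ever larger finite intersections would form a Cauchy net, whose limit lies in
every `K α` since they are closed.
-/

open Real Filter Topology Metric Bornology

lemma cos_sub_le_cos_of_le_add {θ φ A : ℝ} (hθ : 0 ≤ θ) (hφ : φ ≤ π) (hA : 0 ≤ A)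
    (h : θ ≤ φ + A) : cos φ - A ≤ cos θ := by
  rcases le_total θ φ with hle | hle
  · linarith [cos_le_cos_of_nonneg_of_le_pi hθ hφ hle]
  · linarith [(abs_le.1 (abs_cos_sub_cos_le θ φ)).1, abs_of_nonneg (sub_nonneg.2 hle)]

section

variable {X : Type*} [MetricSpace X]

lemma cos_cmpAngle {p x y : X} (hpx : p ≠ x) (hpy : p ≠ y) :
    cos (cmpAngle p x y) =
      (dist p x ^ 2 + dist p y ^ 2 - dist x y ^ 2) / (2 * dist p x * dist p y) := by
  have hx := dist_pos.2 hpx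
  have hy := dist_pos.2 hpy
  have hxy : dist x y ≤ dist p x + dist p y := by linarith [dist_triangle x p y, dist_comm x p]
  have h₁ : dist p y ≤ dist p x + dist x y := dist_triangle p x y
  have h₂ : dist p x ≤ dist p y + dist x y := by linarith [dist_triangle p y x, dist_comm x y]
  apply cos_arccos
  · rw [le_div_iff₀ (by positivity)]
    nlinarith [dist_nonneg (x := x) (y := y)]
  · rw [div_le_one (by positivity)]
    nlinarith [mul_nonneg (by linarith : 0 ≤ dist x y - dist p x + dist p y)
      (by linarith : 0 ≤ dist x y + dist p x - dist p y)]

def IsApproxMidpoint (ε : ℝ) (y z m : X) : Prop :=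
  dist y m ≤ dist y z / 2 + ε ∧ dist m z ≤ dist y z / 2 + ε

lemma IsApproxMidpoint.symm {ε : ℝ} {y z m : X} (h : IsApproxMidpoint ε y z m) :
    IsApproxMidpoint ε z y m := by
  unfold IsApproxMidpoint at *
  rw [dist_comm z m, dist_comm m y, dist_comm z y]
  exact h.symm

lemma IsApproxMidpoint.nonneg {ε : ℝ} {y z m : X} (h : IsApproxMidpoint ε y z m) :
    0 ≤ ε := by
  linarith [dist_triangle y m z, h.1, h.2]

lemma IsApproxMidpoint.ne_left {ε : ℝ} {y z m : X} (h : IsApproxMidpoint ε y z m)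
    (hε : ε < dist y z / 2) : y ≠ m := by
  rintro rfl
  linarith [h.2]

lemma cmpAngle_le_arccos_of_isApproxMidpoint {ε : ℝ} {y z m : X} (hyz : y ≠ z)
    (hε : ε < dist y z / 2) (hm : IsApproxMidpoint ε y z m) :
    cmpAngle y z m ≤ arccos ((dist y z / 2 - ε) / (dist y z / 2 + ε)) := by
  have hε0 := hm.nonneg
  have hL := dist_pos.2 hyz
  have hb' : dist y z / 2 - ε ≤ dist y m := by linarith [dist_triangle y m z, hm.2]
  apply arccos_le_arccos
  rw [div_le_div_iff₀ (by linarith) (by nlinarith), dist_comm z m]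
  obtain ⟨hb, hq⟩ := hm
  set L := dist y z
  set b := dist y m
  set q := dist m z
  have hq0 : 0 ≤ q := dist_nonneg
  -- after clearing denominators, the difference of the two sides is the sum of these products
  nlinarith [mul_nonneg (by linarith : 0 ≤ L / 2 + ε)
      (mul_nonneg (by linarith : 0 ≤ b - (L / 2 - ε)) (by linarith : 0 ≤ b + (L / 2 - ε))),
    mul_nonneg (by linarith : 0 ≤ L / 2 + ε)
      (mul_nonneg (by linarith : 0 ≤ L / 2 + ε - q) (by linarith : 0 ≤ L / 2 + ε + q)),
    mul_nonneg (by linarith : 0 ≤ 2 * L)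
      (mul_nonneg (by linarith : 0 ≤ L / 2 - ε) (by linarith : 0 ≤ L / 2 + ε - b))]

lemma dist_sq_le_of_cmpAngle_le_add {A : ℝ} {x y z m : X} (hyz : y ≠ z) (hyx : y ≠ x)
    (hym : y ≠ m) (hA : 0 ≤ A) (h : cmpAngle y x m ≤ cmpAngle y z x + A) :
    dist x m ^ 2 ≤ dist y x ^ 2 + dist y m ^ 2
      - dist y m * (dist y z ^ 2 + dist y x ^ 2 - dist z x ^ 2) / dist y z
      + 2 * dist y x * dist y m * A := by
  have ha := dist_pos.2 hyx
  have hb := dist_pos.2 hym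
  have hL := dist_pos.2 hyz
  have hcos : cos (cmpAngle y z x) - A ≤ cos (cmpAngle y x m) :=
    cos_sub_le_cos_of_le_add (arccos_nonneg _) (arccos_le_pi _) hA h
  have hlaw : dist x m ^ 2 = dist y x ^ 2 + dist y m ^ 2
      - 2 * dist y x * dist y m * cos (cmpAngle y x m) := by
    rw [cos_cmpAngle hyx hym]
    field_simp
    ring
  have hzx : 2 * dist y x * dist y m * cos (cmpAngle y z x)
      = dist y m * (dist y z ^ 2 + dist y x ^ 2 - dist z x ^ 2) / dist y z := by
    rw [cos_cmpAngle hyz hyx]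
    field_simp
  calc dist x m ^ 2
      ≤ dist y x ^ 2 + dist y m ^ 2 - 2 * dist y x * dist y m * (cos (cmpAngle y z x) - A) := by
        rw [hlaw]; gcongr
    _ = _ := by rw [mul_sub, hzx]; ring

-- The defect in the CN inequality for an `ε`-approximate midpoint `m` of `y, z` with
-- `dist y z = L`, seen from a point within `R` of `y` and `z`; the `arccos` term bounds the
-- comparison angle at `y` between `z` and `m`.
noncomputable def approxMidpointError (L R ε : ℝ) : ℝ :=
  ε * (L + ε) + (2 * R ^ 2 + L ^ 2) * ε / L
    + R * (L + 2 * ε) * arccos ((L / 2 - ε) / (L / 2 + ε))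

lemma tendsto_approxMidpointError {L : ℝ} (hL : 0 < L) (R : ℝ) :
    Tendsto (approxMidpointError L R) (𝓝 0) (𝓝 0) := by
  have hcont : ContinuousAt (approxMidpointError L R) 0 := by
    unfold approxMidpointError
    fun_prop (disch := (simp; positivity))
  simpa [approxMidpointError, div_self (by positivity : L / 2 ≠ 0)] using hcont.tendsto

lemma dist_sq_le_of_cmpAngle_le_add_cmpAngle {ε R : ℝ} {x y z m : X} (hyz : y ≠ z)
    (hyx : y ≠ x) (hε : ε < dist y z / 2) (hm : IsApproxMidpoint ε y z m)
    (haR : dist y x ≤ R) (hcR : dist x z ≤ R)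
    (h : cmpAngle y x m ≤ cmpAngle y z x + cmpAngle y z m) :
    dist x m ^ 2 ≤ dist x y ^ 2 / 2 + dist x z ^ 2 / 2 - dist y z ^ 2 / 4
      + approxMidpointError (dist y z) R ε := by
  set A := arccos ((dist y z / 2 - ε) / (dist y z / 2 + ε))
  have hA0 : 0 ≤ A := arccos_nonneg _
  have hbound := dist_sq_le_of_cmpAngle_le_add hyz hyx (hm.ne_left hε) hA0
    (h.trans (by linarith [cmpAngle_le_arccos_of_isApproxMidpoint hyz hε hm]))
  rw [dist_comm z x] at hbound
  rw [dist_comm x y, approxMidpointError]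
  set a := dist y x
  set b := dist y m
  set c := dist x z
  set L := dist y z
  have hL : 0 < L := dist_pos.2 hyz
  have ha : 0 ≤ a := dist_nonneg
  have hc : 0 ≤ c := dist_nonneg
  have ht : |b - L / 2| ≤ ε :=
    abs_le.2 ⟨by linarith [dist_triangle y m z, hm.2], by linarith [hm.1]⟩
  have hs : |L ^ 2 + a ^ 2 - c ^ 2| ≤ 2 * R ^ 2 + L ^ 2 := by
    have := pow_le_pow_left₀ ha haR 2
    have := pow_le_pow_left₀ hc hcR 2
    exact abs_le.2 ⟨by nlinarith, by nlinarith⟩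
  have hdiv : b * (L ^ 2 + a ^ 2 - c ^ 2) / L
      = (L ^ 2 + a ^ 2 - c ^ 2) / 2 + (b - L / 2) * (L ^ 2 + a ^ 2 - c ^ 2) / L := by
    field_simp; ring
  have h1 : -((b - L / 2) * (L ^ 2 + a ^ 2 - c ^ 2) / L) ≤ (2 * R ^ 2 + L ^ 2) * ε / L := by
    rw [← neg_div]
    gcongr
    calc -((b - L / 2) * (L ^ 2 + a ^ 2 - c ^ 2))
        ≤ |b - L / 2| * |L ^ 2 + a ^ 2 - c ^ 2| := by rw [← abs_mul]; exact neg_le_abs _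
      _ ≤ ε * (2 * R ^ 2 + L ^ 2) := mul_le_mul ht hs (abs_nonneg _) hm.nonneg
      _ = _ := by ring
  have h2 : 2 * a * b * A ≤ R * (L + 2 * ε) * A := by
    refine mul_le_mul_of_nonneg_right ?_ hA0
    nlinarith [hm.1, dist_nonneg (x := y) (y := m)]
  have h3 : b ^ 2 - L ^ 2 / 4 ≤ ε * (L + ε) := by
    obtain ⟨ht1, ht2⟩ := abs_le.1 ht
    nlinarith
  rw [hdiv] at hbound
  linarith

lemma CAT0Cmp.dist_sq_le_add_approxMidpointError (hcat : CAT0Cmp X) {ε R : ℝ} {x y z m : X}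
    (hyz : y ≠ z) (hε : ε < dist y z / 2) (hm : IsApproxMidpoint ε y z m)
    (hyR : dist y x ≤ R) (hzR : dist z x ≤ R) :
    dist x m ^ 2 ≤ dist x y ^ 2 / 2 + dist x z ^ 2 / 2 - dist y z ^ 2 / 4
      + approxMidpointError (dist y z) R ε := by
  have hε0 := hm.nonneg
  have hL : 0 < dist y z := dist_pos.2 hyz
  have hE : ε * (dist y z + ε) ≤ approxMidpointError (dist y z) R ε := by
    have hR : 0 ≤ R := dist_nonneg.trans hyR
    have h1 : 0 ≤ (2 * R ^ 2 + dist y z ^ 2) * ε / dist y z := by positivity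
    have h2 := mul_nonneg (mul_nonneg hR (by linarith : 0 ≤ dist y z + 2 * ε))
      (arccos_nonneg ((dist y z / 2 - ε) / (dist y z / 2 + ε)))
    rw [approxMidpointError]
    linarith
  rcases eq_or_ne x y with rfl | hxy
  · simp only [dist_self]
    nlinarith [hm.1, dist_nonneg (x := x) (y := m)]
  rcases eq_or_ne x z with rfl | hxz
  · rw [dist_comm x m]
    simp only [dist_self]
    nlinarith [hm.2, dist_nonneg (x := m) (y := x), dist_comm x y]
  rcases hcat y z x m hyz hxy.symm (hm.ne_left hε) hxz.symm
      (hm.symm.ne_left (by rwa [dist_comm])) with h | h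
  · exact dist_sq_le_of_cmpAngle_le_add_cmpAngle hyz hxy.symm hε hm hyR
      (by rwa [dist_comm]) h
  · have := dist_sq_le_of_cmpAngle_le_add_cmpAngle hyz.symm hxz.symm (by rwa [dist_comm])
      hm.symm hzR (by rwa [dist_comm]) h
    rw [dist_comm z y] at this
    linarith

-- The Bruhat–Tits CN inequality.
def IsCNMidpoint (y z m : X) : Prop :=
  ∀ x, dist x m ^ 2 ≤ dist x y ^ 2 / 2 + dist x z ^ 2 / 2 - dist y z ^ 2 / 4

lemma IsCNMidpoint.dist_add_dist {y z m : X} (h : IsCNMidpoint y z m) :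
    dist y m + dist m z = dist y z := by
  have hy := h y
  have hz := h z
  simp only [dist_self, dist_comm z y] at hy hz
  have hym : dist y m ≤ dist y z / 2 := abs_le_of_sq_le_sq' (by linarith) (by positivity) |>.2
  have hzm : dist z m ≤ dist y z / 2 := abs_le_of_sq_le_sq' (by linarith) (by positivity) |>.2
  linarith [dist_triangle y m z, dist_comm m z]

theorem exists_isCNMidpoint [CompleteSpace X] (hlen : LengthMid X) (hcat : CAT0Cmp X)
    (y z : X) : ∃ m, IsCNMidpoint y z m := by
  rcases eq_or_ne y z with rfl | hyz
  · exact ⟨y, fun x => by simp only [dist_self]; linarith⟩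
  set L := dist y z
  have hL : 0 < L := dist_pos.2 hyz
  set ε : ℕ → ℝ := fun n => L / 4 / (n + 1)
  have hε_pos : ∀ n, 0 < ε n := fun n => by positivity
  have hε_le : ∀ n, ε n ≤ L / 4 := fun n =>
    div_le_self (by positivity) (by linarith [n.cast_nonneg (α := ℝ)])
  have hε_anti : Antitone ε := fun n k hnk => by
    simp only [ε]
    gcongr
  have hε_lim : Tendsto ε atTop (𝓝 0) := by
    simpa [ε, div_eq_mul_inv] using tendsto_one_div_add_atTop_nhds_zero_nat.const_mul (L / 4)
  choose c hc using fun n => hlen y z (ε n) (hε_pos n)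
  have hε_lt : ∀ n, ε n < L / 2 := fun n => by linarith [hε_le n]
  have hcR : ∀ n, dist y (c n) ≤ 3 * L / 4 ∧ dist z (c n) ≤ 3 * L / 4 := fun n =>
    ⟨by linarith [(hc n).1, hε_le n], by linarith [(hc n).2, hε_le n, dist_comm z (c n)]⟩
  have hcauchy : CauchySeq c := by
    refine cauchySeq_of_le_tendsto_0'
      (fun n => √((L / 2 + ε n) ^ 2 - L ^ 2 / 4 + approxMidpointError L (3 * L / 4) (ε n)))
      (fun n k hnk => ?_) ?_
    · have h := hcat.dist_sq_le_add_approxMidpointError hyz (hε_lt n) (hc n) (hcR k).1 (hcR k).2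
      have hy : dist (c k) y ≤ L / 2 + ε n := by
        linarith [(hc k).1, hε_anti hnk, dist_comm y (c k)]
      have hz : dist (c k) z ≤ L / 2 + ε n := by linarith [(hc k).2, hε_anti hnk]
      rw [dist_comm]
      refine Real.le_sqrt_of_sq_le ?_
      nlinarith [dist_nonneg (x := c k) (y := y), dist_nonneg (x := c k) (y := z)]
    · have := (((hε_lim.const_add (L / 2)).pow 2).sub_const (L ^ 2 / 4)).add
        ((tendsto_approxMidpointError hL (3 * L / 4)).comp hε_lim)
      rw [show (L / 2 + 0) ^ 2 - L ^ 2 / 4 + 0 = 0 by ring] at this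
      simpa using this.sqrt
  obtain ⟨m, hm⟩ := cauchySeq_tendsto_of_complete hcauchy
  refine ⟨m, fun x => ?_⟩
  have hbound : ∀ n, dist x (c n) ^ 2 ≤ dist x y ^ 2 / 2 + dist x z ^ 2 / 2 - L ^ 2 / 4
      + approxMidpointError L (max (dist y x) (dist z x)) (ε n) := fun n =>
    hcat.dist_sq_le_add_approxMidpointError hyz (hε_lt n) (hc n) (le_max_left _ _)
      (le_max_right _ _)
  have hlim := ((tendsto_approxMidpointError hL (max (dist y x) (dist z x))).comp hε_lim).const_add
    (dist x y ^ 2 / 2 + dist x z ^ 2 / 2 - L ^ 2 / 4)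
  rw [add_zero] at hlim
  exact le_of_tendsto_of_tendsto' ((tendsto_const_nhds.dist hm).pow 2) hlim hbound

lemma mconvexSet_iInter {ι : Sort*} {K : ι → Set X} (h : ∀ i, MConvexSet (K i)) :
    MConvexSet (⋂ i, K i) := fun x hx y hy z hz =>
  Set.mem_iInter.2 fun i => h i x (Set.mem_iInter.1 hx i) y (Set.mem_iInter.1 hy i) z hz

lemma MConvexSet.dist_sq_le (hmid : ∀ y z : X, ∃ m, IsCNMidpoint y z m) {C : Set X}
    (hC : MConvexSet C) {a b : X} (ha : a ∈ C) (hb : b ∈ C) (p : X) :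
    dist a b ^ 2 ≤ 2 * dist p a ^ 2 + 2 * dist p b ^ 2 - 4 * infDist p C ^ 2 := by
  obtain ⟨m, hm⟩ := hmid a b
  have hpm : infDist p C ≤ dist p m := infDist_le_dist_of_mem (hC a ha b hb m hm.dist_add_dist)
  nlinarith [hm p, infDist_nonneg (x := p) (s := C)]

lemma MConvexSet.dist_sq_le_of_dist_le (hmid : ∀ y z : X, ∃ m, IsCNMidpoint y z m)
    {C : Set X} (hC : MConvexSet C) {a b p : X} (ha : a ∈ C) (hb : b ∈ C) {D η : ℝ}
    (hpa : dist p a ≤ D + η) (hpb : dist p b ≤ D + η) (hD : D ≤ infDist p C + η)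
    (hdD : infDist p C ≤ D) :
    dist a b ^ 2 ≤ 8 * η * (2 * D + η) := by
  nlinarith [hC.dist_sq_le hmid ha hb p, infDist_nonneg (x := p) (s := C),
    dist_nonneg (x := p) (y := a), dist_nonneg (x := p) (y := b)]

lemma bddAbove_range_infDist {ι : Type*} [SemilatticeSup ι] {C : ι → Set X}
    (hanti : Antitone C) (hne : ∀ i, (C i).Nonempty) (hbd : ∃ i, IsBounded (C i)) (p : X) :
    BddAbove (Set.range fun i => infDist p (C i)) := by
  obtain ⟨i₀, hi₀⟩ := hbd
  obtain ⟨r, hr⟩ := hi₀.subset_closedBall p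
  refine ⟨r, Set.forall_mem_range.2 fun i => ?_⟩
  obtain ⟨q, hq⟩ := hne (i ⊔ i₀)
  exact (infDist_le_dist_of_mem (hanti le_sup_left hq)).trans
    (mem_closedBall'.1 (hr (hanti le_sup_right hq)))

theorem nonempty_iInter_of_antitone_mconvex [CompleteSpace X]
    (hmid : ∀ y z : X, ∃ m, IsCNMidpoint y z m) {ι : Type*} [SemilatticeSup ι] [Nonempty ι]
    {C : ι → Set X} (hanti : Antitone C) (hne : ∀ i, (C i).Nonempty)
    (hcl : ∀ i, IsClosed (C i)) (hcv : ∀ i, MConvexSet (C i)) (hbd : ∃ i, IsBounded (C i)) :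
    (⋂ i, C i).Nonempty := by
  obtain ⟨p, -⟩ := hne (Classical.arbitrary ι)
  set d : ι → ℝ := fun i => infDist p (C i)
  have hd_mono : Monotone d := fun i j hij => infDist_le_infDist_of_subset (hanti hij) (hne j)
  have hd_bdd : BddAbove (Set.range d) := bddAbove_range_infDist hanti hne hbd p
  set D := ⨆ i, d i
  have hdD : ∀ i, d i ≤ D := fun i => le_ciSup hd_bdd i
  -- `u (i, n)` is a point of `C i` that is `1 / (n + 1)`-almost closest to `p`.
  choose u huC hud using fun a : ι × ℕ =>
    (infDist_lt_iff (hne a.1)).1 (lt_add_of_pos_right (d a.1) (Nat.one_div_pos_of_nat (n := a.2)))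
  set η : ι × ℕ → ℝ := fun a => max (D - d a.1) (1 / (a.2 + 1))
  have hη : Tendsto η atTop (𝓝 0) := by
    rw [← prod_atTop_atTop_eq]
    have h1 := ((tendsto_atTop_ciSup hd_mono hd_bdd).comp
      (tendsto_fst (f := (atTop : Filter ι)) (g := (atTop : Filter ℕ)))).const_sub D
    have h2 := (tendsto_one_div_add_atTop_nhds_zero_nat (𝕜 := ℝ)).comp
      (tendsto_snd (f := (atTop : Filter ι)) (g := (atTop : Filter ℕ)))
    simpa [η, D] using h1.max h2
  have hcauchy : CauchySeq u := by
    refine cauchySeq_of_le_tendsto_0' (fun a => √(8 * η a * (2 * D + η a)))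
      (fun a b hab => Real.le_sqrt_of_sq_le ?_) ?_
    · have hgap : D - d a.1 ≤ η a := le_max_left _ _
      have hprec : 1 / ((a.2 : ℝ) + 1) ≤ η a := le_max_right _ _
      have hb : 1 / ((b.2 : ℝ) + 1) ≤ 1 / (a.2 + 1) := Nat.one_div_le_one_div hab.2
      exact (hcv a.1).dist_sq_le_of_dist_le hmid (huC a) (hanti hab.1 (huC b))
        (by linarith [hud a, hdD a.1]) (by linarith [hud b, hdD b.1]) (by linarith) (hdD a.1)
    · simpa using ((hη.const_mul 8).mul (hη.const_add (2 * D))).sqrt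
  obtain ⟨w, hw⟩ := cauchySeq_tendsto_of_complete hcauchy
  refine ⟨w, Set.mem_iInter.2 fun i => (hcl i).mem_of_tendsto hw ?_⟩
  filter_upwards [eventually_ge_atTop (i, 0)] with a ha using hanti ha.1 (huC a)

end

theorem helly_CAT0 {U : Type*} [MetricSpace U] [CompleteSpace U]
    (hlen : LengthMid U) (hcat : CAT0Cmp U)
    {ι : Type*} (K : ι → Set U)
    (hcl : ∀ α, IsClosed (K α)) (hbd : ∀ α, Bornology.IsBounded (K α))
    (hcv : ∀ α, MConvexSet (K α))
    (hem : (⋂ α, K α) = ∅) :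
    ∃ s : Finset ι, (⋂ α ∈ s, K α) = ∅ := by
  classical
  by_contra! hne
  have hbd' : ∃ s : Finset ι, IsBounded (⋂ α ∈ s, K α) := by
    rcases isEmpty_or_nonempty ι with hι | ⟨⟨α₀⟩⟩
    · rw [Set.iInter_of_empty] at hem
      exact ⟨∅, by simp [hem]⟩
    · exact ⟨{α₀}, by simpa using hbd α₀⟩
  obtain ⟨w, hw⟩ := nonempty_iInter_of_antitone_mconvex
    (C := fun s : Finset ι => ⋂ α ∈ s, K α) (exists_isCNMidpoint hlen hcat)
    (fun s t hst => Set.biInter_subset_biInter_left (Finset.coe_subset.2 hst)) hne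
    (fun s => isClosed_biInter fun α _ => hcl α)
    (fun s => mconvexSet_iInter fun α => mconvexSet_iInter fun _ => hcv α) hbd'
  have : w ∈ ⋂ α, K α := Set.mem_iInter.2 fun α => by
    simpa using Set.mem_iInter.1 hw {α}
  simp [hem] at this
end

section
/- Point-on-side comparison for upper curvature bound, κ = 0 case: Let U be a complete length metric space satisfying the CAT(0) comparison. Let p, x, y, z ∈ U with x ≠ y and dist(x,z) + dist(z,y) = dist(x,y) (z lies between x and y). Put a = dist(x,y) and s = dist(x,z). Then dist(p,z)² ≤ ((a − s)·dist(p,x)² + s·dist(p,y)²)/a − s·(a − s); i.e. dist(p,z) is at most the distance from the model vertex p̃ to the corresponding point z̃ on the side [x̃ỹ] of the Euclidean comparison triangle. -/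
lemma cmpQuot_mem {X : Type*} [MetricSpace X] (p x y : X) (hpx : p ≠ x) (hpy : p ≠ y) :
    -1 ≤ (dist p x ^ 2 + dist p y ^ 2 - dist x y ^ 2) / (2 * dist p x * dist p y) ∧
      (dist p x ^ 2 + dist p y ^ 2 - dist x y ^ 2) / (2 * dist p x * dist p y) ≤ 1 := by
  have hu : 0 < dist p x := dist_pos.2 hpx
  have hv : 0 < dist p y := dist_pos.2 hpy
  have h1 : dist x y ≤ dist p x + dist p y := by
    have := dist_triangle x p y; rw [dist_comm x p] at this; linarith
  have h2 : dist p x ≤ dist p y + dist x y := by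
    have := dist_triangle p y x; rw [dist_comm y x] at this; linarith
  have h3 : dist p y ≤ dist p x + dist x y := dist_triangle p x y
  have hw : 0 ≤ dist x y := dist_nonneg
  constructor
  · rw [le_div_iff₀ (by positivity)]; nlinarith
  · rw [div_le_one (by positivity)]; nlinarith

lemma cos_quot_of_le {X : Type*} [MetricSpace X] {p x y p' x' y' : X}
    (h : cmpAngle p x y ≤ cmpAngle p' x' y')
    (h1 : p ≠ x) (h2 : p ≠ y) (h3 : p' ≠ x') (h4 : p' ≠ y') :
    (dist p' x' ^ 2 + dist p' y' ^ 2 - dist x' y' ^ 2) / (2 * dist p' x' * dist p' y') ≤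
      (dist p x ^ 2 + dist p y ^ 2 - dist x y ^ 2) / (2 * dist p x * dist p y) := by
  obtain ⟨hq1, hq1'⟩ := cmpQuot_mem p x y h1 h2
  obtain ⟨hq2, hq2'⟩ := cmpQuot_mem p' x' y' h3 h4
  have := Real.cos_le_cos_of_nonneg_of_le_pi (Real.arccos_nonneg _)
    (Real.arccos_le_pi _) h
  rwa [Real.cos_arccos hq1 hq1', Real.cos_arccos hq2 hq2'] at this

theorem point_on_side_CAT0 {U : Type*} [MetricSpace U] [CompleteSpace U]
    (hlen : LengthMid U) (hcat : CAT0Cmp U)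
    (p x y z : U) (hxy : x ≠ y) (hz : dist x z + dist z y = dist x y) :
    dist p z ^ 2 ≤
      ((dist x y - dist x z) * dist p x ^ 2 + dist x z * dist p y ^ 2) / dist x y
        - dist x z * (dist x y - dist x z) := by
  have ha : 0 < dist x y := dist_pos.2 hxy
  by_cases hzx : z = x
  · subst hzx
    simp only [dist_self, sub_zero, zero_mul, mul_zero, add_zero, sub_self]
    rw [mul_div_cancel_left₀ _ ha.ne']
  by_cases hzy : z = y
  · subst hzy
    simp only [sub_self, zero_mul, zero_add, mul_zero, sub_zero]
    rw [mul_div_cancel_left₀ _ ha.ne']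
  by_cases hpx : p = x
  · subst hpx
    simp only [dist_self]
    rw [le_sub_iff_add_le, le_div_iff₀ ha]
    nlinarith [hz]
  by_cases hpy : p = y
  · subst hpy
    have h1 : dist z p = dist x p - dist x z := by linarith
    simp only [dist_self]
    rw [le_sub_iff_add_le, le_div_iff₀ ha, dist_comm p z, h1, dist_comm p x]
    nlinarith []
  -- main case
  have hxp : x ≠ p := Ne.symm hpx
  have hxz : x ≠ z := Ne.symm hzx
  have hyp : y ≠ p := Ne.symm hpy
  have hyz : y ≠ z := Ne.symm hzy
  have hs : 0 < dist x z := dist_pos.2 hxz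
  have hs' : 0 < dist y z := dist_pos.2 hyz
  have hzy' : dist z y = dist x y - dist x z := by linarith
  have hb : 0 < dist p x := dist_pos.2 fun h => hpx h
  have hc : 0 < dist p y := dist_pos.2 fun h => hpy h
  have hss : 0 < dist x y - dist x z := by rw [← hzy', dist_comm z y]; exact hs'
  rcases hcat x y p z hxy hxp hxz hyp hyz with h | h
  · -- cmpAngle x p z ≤ cmpAngle x y p + cmpAngle x y z, with cmpAngle x y z = 0
    have e0 : cmpAngle x y z = 0 := by
      unfold cmpAngle
      have hnum : dist x y ^ 2 + dist x z ^ 2 - dist y z ^ 2 = 2 * dist x y * dist x z := by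
        rw [dist_comm y z, hzy']; ring
      rw [hnum, div_self (mul_pos (mul_pos two_pos ha) hs).ne', Real.arccos_one]
    rw [e0, add_zero] at h
    have key := cos_quot_of_le h hxp hxz hxy hxp
    rw [dist_comm x p, dist_comm y p] at key
    rw [le_sub_iff_add_le, le_div_iff₀ ha]
    rw [div_le_div_iff₀ (mul_pos (mul_pos two_pos ha) hb)
      (mul_pos (mul_pos two_pos hb) hs)] at key
    nlinarith [key]
  · -- cmpAngle y p z ≤ cmpAngle y x p + cmpAngle y x z, with cmpAngle y x z = 0
    have hyx : 0 < dist y x := by rw [dist_comm]; exact ha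
    have e0 : cmpAngle y x z = 0 := by
      unfold cmpAngle
      have hnum : dist y x ^ 2 + dist y z ^ 2 - dist x z ^ 2 = 2 * dist y x * dist y z := by
        rw [dist_comm y x, dist_comm y z, hzy']; ring
      rw [hnum, div_self (mul_pos (mul_pos two_pos hyx) hs').ne', Real.arccos_one]
    rw [e0, add_zero] at h
    have key := cos_quot_of_le h hyp hyz (Ne.symm hxy) hyp
    rw [dist_comm y p, dist_comm x p, dist_comm y x, dist_comm y z, hzy'] at key
    rw [le_sub_iff_add_le, le_div_iff₀ ha]
    rw [div_le_div_iff₀ (mul_pos (mul_pos two_pos ha) hc)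
      (mul_pos (mul_pos two_pos hc) hss)] at key
    nlinarith [key]
end

section
/- Hemisphere lemma: Let γ : ℝ → EuclideanSpace ℝ (Fin 3) be a continuous curve on [0,1] with γ(0) = γ(1) whose image on [0,1] lies in the unit sphere {x : ‖x‖ = 1}. If the length of γ on [0,1] (its total variation eVariationOn γ (Set.Icc 0 1)) is strictly less than 2π, then γ lies in an open hemisphere: there exists v with ‖v‖ = 1 and ⟪v, γ(t)⟫ > 0 for all t ∈ [0,1]. If the length is at most 2π, then γ lies in a closed hemisphere: there exists v with ‖v‖ = 1 and ⟪v, γ(t)⟫ ≥ 0 for all t ∈ [0,1]. -/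
/-!
Split the closed curve at the parameter `t₀` that halves its length `L`, and put `p = γ 0`,
`q = γ t₀`. The angle between two points of the unit sphere is at most the length of any curve
joining them on the sphere, so every point `y` of the curve satisfies `∠(p, y) + ∠(y, q) ≤ L / 2`,
which for `L ≤ 2π` says that `⟪p + q, y⟫ ≥ 0` (and `> 0` if `L < 2π`). This settles everything
except the case `q = -p`, `L = 2π`. There each half is a curve of length `π` from a point to its
antipode, hence a great semicircle through a point `m` (resp. `m'`) orthogonal to `p`; in dimension
three some unit vector is orthogonal to both `p` and `m - m'`, and up to sign it has nonnegative
inner product with both semicircles.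
-/

open Set Filter Topology Real InnerProductGeometry Module
open scoped RealInnerProductSpace

section Variation

variable {α E : Type*} [LinearOrder α] [PseudoMetricSpace E] {f : α → E} {s : Set α}

lemma dist_le_variationOnFromTo (hf : LocallyBoundedVariationOn f s) {a b : α} (ha : a ∈ s)
    (hb : b ∈ s) (hab : a ≤ b) : dist (f a) (f b) ≤ variationOnFromTo f s a b := by
  rw [variationOnFromTo.eq_of_le f s hab, dist_edist]
  exact ENNReal.toReal_mono (hf a b ha hb)
    (eVariationOn.edist_le f ⟨ha, le_rfl, hab⟩ ⟨hb, hab, le_rfl⟩)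

lemma continuousOn_variationOnFromTo [TopologicalSpace α] [OrderTopology α]
    (hf : LocallyBoundedVariationOn f s) (hc : ContinuousOn f s) {a : α} (ha : a ∈ s) :
    ContinuousOn (variationOnFromTo f s a) s := by
  intro b hb
  have hleft : ContinuousWithinAt (variationOnFromTo f s a) (s ∩ Iio b) b := by
    simpa [ContinuousWithinAt] using
      variationOnFromTo.tendsto_left ha hb hf ((hc b hb).mono inter_subset_left)
  have hright : ContinuousWithinAt (variationOnFromTo f s a) (s ∩ Ioi b) b := by
    simpa [ContinuousWithinAt] using
      variationOnFromTo.tendsto_right ha hb hf ((hc b hb).mono inter_subset_left)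
  refine (hleft.union hright).insert.mono fun t ht => ?_
  rcases lt_trichotomy t b with h | rfl | h
  · exact .inr (.inl ⟨ht, h⟩)
  · exact .inl rfl
  · exact .inr (.inr ⟨ht, h⟩)

lemma exists_variationOnFromTo_eq {f : ℝ → E} {s : Set ℝ} [s.OrdConnected]
    (hf : LocallyBoundedVariationOn f s) (hc : ContinuousOn f s) {a b : ℝ} (ha : a ∈ s)
    (hb : b ∈ s) (hab : a ≤ b) {c : ℝ} (hc0 : 0 ≤ c) (hcb : c ≤ variationOnFromTo f s a b) :
    ∃ t ∈ Icc a b, variationOnFromTo f s a t = c :=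
  intermediate_value_Icc hab
    ((continuousOn_variationOnFromTo hf hc ha).mono (Set.Icc_subset s ha hb))
    ⟨by rwa [variationOnFromTo.self], hcb⟩

end Variation

variable {V : Type*} [NormedAddCommGroup V] [InnerProductSpace ℝ V]

section UnitVectors

variable {x y : V}

lemma norm_sub_eq_two_mul_sin_half_angle (hx : ‖x‖ = 1) (hy : ‖y‖ = 1) :
    ‖x - y‖ = 2 * sin (angle x y / 2) := by
  have hsin : 0 ≤ sin (angle x y / 2) :=
    sin_nonneg_of_nonneg_of_le_pi (by linarith [angle_nonneg x y])
      (by linarith [angle_le_pi x y, pi_pos])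
  refine (sq_eq_sq₀ (norm_nonneg _) (by positivity)).mp ?_
  rw [sq, norm_sub_sq_eq_norm_sq_add_norm_sq_sub_two_mul_norm_mul_norm_mul_cos_angle, hx, hy,
    mul_pow, sin_sq_eq_half_sub, mul_div_cancel₀ _ two_ne_zero]
  ring

lemma angle_le_pi_div_two_mul_norm_sub (hx : ‖x‖ = 1) (hy : ‖y‖ = 1) :
    angle x y ≤ π / 2 * ‖x - y‖ := by
  have := mul_le_sin (x := angle x y / 2) (by linarith [angle_nonneg x y])
    (by linarith [angle_le_pi x y])
  rw [norm_sub_eq_two_mul_sin_half_angle hx hy]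
  field_simp at this ⊢
  linarith [pi_pos]

lemma one_sub_sq_div_mul_angle_le_norm_sub (hx : ‖x‖ = 1) (hy : ‖y‖ = 1) :
    (1 - angle x y ^ 2 / 24) * angle x y ≤ ‖x - y‖ := by
  have := sin_ge_sub_cube (x := angle x y / 2) (by linarith [angle_nonneg x y])
  rw [norm_sub_eq_two_mul_sin_half_angle hx hy]
  linarith

end UnitVectors

section Hemisphere

variable {p q : V}

lemma inner_add_eq_mul_norm (hp : ‖p‖ = 1) (hq : ‖q‖ = 1) (y : V) :
    ⟪p + q, y⟫ = (cos (angle y q) - cos (π - angle p y)) * ‖y‖ := by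
  rw [← angle_comm y p, ← angle_neg_right, sub_mul]
  have e1 := cos_angle_mul_norm_mul_norm y q
  have e2 := cos_angle_mul_norm_mul_norm y (-p)
  rw [hq, mul_one] at e1
  rw [norm_neg, hp, mul_one, inner_neg_right] at e2
  rw [e1, e2, inner_add_left, real_inner_comm p, real_inner_comm q]
  ring

lemma inner_add_pos_of_angle_add_angle_lt_pi (hp : ‖p‖ = 1) (hq : ‖q‖ = 1) {y : V}
    (hy : y ≠ 0) (h : angle p y + angle y q < π) : 0 < ⟪p + q, y⟫ := by
  rw [inner_add_eq_mul_norm hp hq]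
  refine mul_pos (sub_pos.mpr ?_) (norm_pos_iff.mpr hy)
  exact strictAntiOn_cos ⟨angle_nonneg _ _, angle_le_pi _ _⟩
    ⟨by linarith [angle_le_pi p y], by linarith [angle_nonneg p y]⟩ (by linarith)

lemma inner_add_nonneg_of_angle_add_angle_le_pi (hp : ‖p‖ = 1) (hq : ‖q‖ = 1) {y : V}
    (h : angle p y + angle y q ≤ π) : 0 ≤ ⟪p + q, y⟫ := by
  rw [inner_add_eq_mul_norm hp hq]
  refine mul_nonneg (sub_nonneg.mpr ?_) (norm_nonneg y)
  exact antitoneOn_cos ⟨angle_nonneg _ _, angle_le_pi _ _⟩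
    ⟨by linarith [angle_le_pi p y], by linarith [angle_nonneg p y]⟩ (by linarith)

lemma inner_nonneg_of_angle_add_angle_le {x y z w : V} (h : angle x y + angle y z ≤ angle x z)
    (hxz : angle x z ≠ π) (hx : 0 ≤ ⟪w, x⟫) (hz : 0 ≤ ⟪w, z⟫) : 0 ≤ ⟪w, y⟫ := by
  rcases eq_or_ne y 0 with rfl | hy
  · simp
  have hspan := ((angle_eq_angle_add_angle_iff hy).mp
    (le_antisymm (angle_le_angle_add_angle x y z) h)).resolve_left hxz
  obtain ⟨a, b, rfl⟩ := Submodule.mem_span_pair.mp hspan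
  simp only [inner_add_right, NNReal.smul_def, real_inner_smul_right]
  positivity

lemma exists_norm_eq_one_inner_eq_zero_inner_nonneg [FiniteDimensional ℝ V]
    (hV : 3 ≤ finrank ℝ V) (p m m' : V) :
    ∃ w : V, ‖w‖ = 1 ∧ ⟪w, p⟫ = 0 ∧ 0 ≤ ⟪w, m⟫ ∧ 0 ≤ ⟪w, m'⟫ := by
  set K := Submodule.span ℝ (range ![p, m - m'])
  have hKperp : Kᗮ ≠ ⊥ := by
    have := K.finrank_add_finrank_orthogonal
    have : finrank ℝ K ≤ 2 := (finrank_range_le_card (R := ℝ) ![p, m - m']).trans (by simp)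
    rw [Ne, ← Submodule.finrank_eq_zero]
    omega
  obtain ⟨w, hwK, hw0⟩ := Submodule.exists_mem_ne_zero_of_ne_bot hKperp
  set u := ‖w‖⁻¹ • w
  have hu : ‖u‖ = 1 := norm_smul_inv_norm hw0
  have hK : ∀ i, ⟪u, ![p, m - m'] i⟫ = 0 := fun i =>
    K.inner_left_of_mem_orthogonal (Submodule.subset_span ⟨i, rfl⟩) (Kᗮ.smul_mem _ hwK)
  have hp : ⟪u, p⟫ = 0 := hK 0
  have hmm' : ⟪u, m⟫ = ⟪u, m'⟫ := by simpa [inner_sub_right, sub_eq_zero] using hK 1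
  rcases le_total 0 ⟪u, m⟫ with hm | hm
  · exact ⟨u, hu, hp, hm, hmm' ▸ hm⟩
  · refine ⟨-u, by rwa [norm_neg], ?_, ?_, ?_⟩ <;> simp only [inner_neg_left] <;> linarith

end Hemisphere

section SphereCurve

variable {f : ℝ → V} {s : Set ℝ} [s.OrdConnected]

lemma mul_angle_le_variationOnFromTo {K δ : ℝ} (hK : 0 ≤ K) (hδ : 0 < δ)
    (hf : LocallyBoundedVariationOn f s)
    (hloc : ∀ u ∈ s, ∀ v ∈ s, u ≤ v → v ≤ u + δ → K * angle (f u) (f v) ≤ dist (f u) (f v))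
    {a b : ℝ} (ha : a ∈ s) (hb : b ∈ s) (hab : a ≤ b) :
    K * angle (f a) (f b) ≤ variationOnFromTo f s a b := by
  suffices H : ∀ n : ℕ, ∀ u ∈ s, ∀ v ∈ s, u ≤ v → v ≤ u + n * δ →
      K * angle (f u) (f v) ≤ variationOnFromTo f s u v by
    obtain ⟨n, hn⟩ := exists_nat_ge ((b - a) / δ)
    exact H n a ha b hb hab (by rw [div_le_iff₀ hδ] at hn; linarith)
  intro n
  induction n with
  | zero =>
    intro u hu v hv huv hvu
    exact (hloc u hu v hv huv (by push_cast at hvu; linarith)).trans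
      (dist_le_variationOnFromTo hf hu hv huv)
  | succ n ih =>
    intro u hu v hv huv hvu
    rcases le_or_gt v (u + δ) with hclose | hfar
    · exact (hloc u hu v hv huv hclose).trans (dist_le_variationOnFromTo hf hu hv huv)
    have hmid : u + δ ∈ s := Set.Icc_subset s hu hv ⟨by linarith, hfar.le⟩
    calc K * angle (f u) (f v)
        ≤ K * angle (f u) (f (u + δ)) + K * angle (f (u + δ)) (f v) := by
          rw [← mul_add]
          exact mul_le_mul_of_nonneg_left (angle_le_angle_add_angle _ _ _) hK
      _ ≤ variationOnFromTo f s u (u + δ) + variationOnFromTo f s (u + δ) v := by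
          gcongr
          · exact (hloc u hu _ hmid (by linarith) le_rfl).trans
              (dist_le_variationOnFromTo hf hu hmid (by linarith))
          · exact ih _ hmid v hv hfar.le (by push_cast at hvu; linarith)
      _ = variationOnFromTo f s u v := variationOnFromTo.add hf hu hmid hv

variable (hs : IsCompact s) (hf : LocallyBoundedVariationOn f s) (hc : ContinuousOn f s)
  (hsph : ∀ t ∈ s, ‖f t‖ = 1)
include hs hf hc hsph

lemma angle_le_variationOnFromTo {a b : ℝ} (ha : a ∈ s) (hb : b ∈ s) (hab : a ≤ b) :
    angle (f a) (f b) ≤ variationOnFromTo f s a b := by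
  -- on short pieces the chord is at least `1 - η ^ 2 / 24` times the angle; then let `η → 0`
  have hK : ∀ η ∈ Ioo (0 : ℝ) 1,
      (1 - η ^ 2 / 24) * angle (f a) (f b) ≤ variationOnFromTo f s a b := by
    rintro η ⟨hη0, hη1⟩
    obtain ⟨δ, hδ, hfδ⟩ := Metric.uniformContinuousOn_iff_le.mp
      (hs.uniformContinuousOn_of_continuous hc) (2 / π * η) (by positivity)
    refine mul_angle_le_variationOnFromTo (by nlinarith) hδ hf (fun u hu v hv huv hvu => ?_)
      ha hb hab
    have hθ : angle (f u) (f v) ≤ η := by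
      have hd := hfδ u hu v hv (by rw [Real.dist_eq, abs_le]; constructor <;> linarith)
      rw [dist_eq_norm] at hd
      calc angle (f u) (f v) ≤ π / 2 * ‖f u - f v‖ :=
            angle_le_pi_div_two_mul_norm_sub (hsph u hu) (hsph v hv)
        _ ≤ π / 2 * (2 / π * η) := by gcongr
        _ = η := by field_simp
    have hsq := pow_le_pow_left₀ (angle_nonneg _ _) hθ 2
    have := one_sub_sq_div_mul_angle_le_norm_sub (hsph u hu) (hsph v hv)
    rw [dist_eq_norm]
    nlinarith [mul_le_mul_of_nonneg_left hsq (angle_nonneg (f u) (f v))]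
  have hlim : Tendsto (fun η : ℝ => (1 - η ^ 2 / 24) * angle (f a) (f b)) (𝓝[>] 0)
      (𝓝 (angle (f a) (f b))) := by
    have : Continuous (fun η : ℝ => (1 - η ^ 2 / 24) * angle (f a) (f b)) := by fun_prop
    simpa using (this.tendsto 0).mono_left nhdsWithin_le_nhds
  exact le_of_tendsto hlim (Filter.mem_of_superset (Ioo_mem_nhdsGT one_pos) hK)

lemma angle_add_angle_le_variationOnFromTo {a t b : ℝ} (ha : a ∈ s) (hb : b ∈ s)
    (ht : t ∈ Icc a b) :
    angle (f a) (f t) + angle (f t) (f b) ≤ variationOnFromTo f s a b := by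
  have hts : t ∈ s := Set.Icc_subset s ha hb ht
  rw [← variationOnFromTo.add hf ha hts hb]
  exact add_le_add (angle_le_variationOnFromTo hs hf hc hsph ha hts ht.1)
    (angle_le_variationOnFromTo hs hf hc hsph hts hb ht.2)

lemma exists_inner_nonneg_of_eq_neg_of_variationOnFromTo_le_pi {a b : ℝ} (ha : a ∈ s)
    (hb : b ∈ s) (hab : a ≤ b) (hanti : f b = -f a) (hvar : variationOnFromTo f s a b ≤ π) :
    ∃ m : V, ∀ w : V, ⟪w, f a⟫ = 0 → 0 ≤ ⟪w, m⟫ → ∀ t ∈ Icc a b, 0 ≤ ⟪w, f t⟫ := by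
  have hfa : f a ≠ 0 := ne_zero_of_norm_ne_zero (by rw [hsph a ha]; exact one_ne_zero)
  have hπ : π ≤ variationOnFromTo f s a b := by
    simpa [hanti, angle_neg_right, angle_self hfa] using
      angle_le_variationOnFromTo hs hf hc hsph ha hb hab
  obtain ⟨c, hcab, hac⟩ := exists_variationOnFromTo_eq hf hc ha hb hab (c := π / 2)
    (by positivity) (by linarith [pi_pos])
  have hcs : c ∈ s := Set.Icc_subset s ha hb hcab
  have hcb : variationOnFromTo f s c b ≤ π / 2 := by
    linarith [variationOnFromTo.add hf ha hcs hb]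
  have h1 : angle (f a) (f c) ≤ π / 2 :=
    hac ▸ angle_le_variationOnFromTo hs hf hc hsph ha hcs hcab.1
  have h2 : angle (f c) (f b) ≤ π / 2 :=
    (angle_le_variationOnFromTo hs hf hc hsph hcs hb hcab.2).trans hcb
  have h3 : angle (f c) (f b) = π - angle (f a) (f c) := by
    rw [hanti, angle_neg_right, angle_comm]
  -- both halves at `f c` are tight in the triangle inequality, so they lie in the cones
  -- spanned by `f a, f c` and by `f c, -f a`
  refine ⟨f c, fun w hwa hwc t ht => ?_⟩
  rcases le_total t c with htc | htc
  · refine inner_nonneg_of_angle_add_angle_le ?_ (by linarith [pi_pos]) hwa.ge hwc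
    linarith [angle_add_angle_le_variationOnFromTo hs hf hc hsph ha hcs ⟨ht.1, htc⟩]
  · refine inner_nonneg_of_angle_add_angle_le ?_ (by linarith [pi_pos]) hwc
      (by rw [hanti, inner_neg_right, hwa, neg_zero])
    linarith [angle_add_angle_le_variationOnFromTo hs hf hc hsph hcs hb ⟨htc, ht.2⟩]

end SphereCurve

section ClosedCurve

variable {γ : ℝ → V} {a b : ℝ} (hab : a ≤ b) (hc : ContinuousOn γ (Icc a b))
  (hclosed : γ a = γ b) (hsph : ∀ t ∈ Icc a b, ‖γ t‖ = 1)
include hab hc hclosed hsph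

lemma exists_forall_angle_add_angle_le_half (hf : BoundedVariationOn γ (Icc a b)) :
    ∃ t₀ ∈ Icc a b,
      variationOnFromTo γ (Icc a b) a t₀ = variationOnFromTo γ (Icc a b) a b / 2 ∧
      variationOnFromTo γ (Icc a b) t₀ b = variationOnFromTo γ (Icc a b) a b / 2 ∧
      ∀ t ∈ Icc a b, angle (γ a) (γ t) + angle (γ t) (γ t₀) ≤
        variationOnFromTo γ (Icc a b) a b / 2 := by
  have hf' := hf.locallyBoundedVariationOn
  have ha : a ∈ Icc a b := left_mem_Icc.mpr hab
  have hb : b ∈ Icc a b := right_mem_Icc.mpr hab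
  have hL := variationOnFromTo.nonneg_of_le γ (Icc a b) hab
  obtain ⟨t₀, ht₀, h₁⟩ := exists_variationOnFromTo_eq hf' hc ha hb hab (by positivity)
    (half_le_self hL)
  have h₂ : variationOnFromTo γ (Icc a b) t₀ b = variationOnFromTo γ (Icc a b) a b / 2 := by
    linarith [variationOnFromTo.add hf' ha ht₀ hb]
  refine ⟨t₀, ht₀, h₁, h₂, fun t ht => ?_⟩
  rcases le_total t t₀ with htt | htt
  · exact h₁ ▸ angle_add_angle_le_variationOnFromTo isCompact_Icc hf' hc hsph ha ht₀ ⟨ht.1, htt⟩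
  · have := angle_add_angle_le_variationOnFromTo isCompact_Icc hf' hc hsph ht₀ hb ⟨htt, ht.2⟩
    rw [← hclosed, angle_comm (γ t)] at this
    linarith [angle_comm (γ t) (γ t₀)]

lemma exists_inner_pos_of_eVariationOn_lt
    (h : eVariationOn γ (Icc a b) < ENNReal.ofReal (2 * π)) :
    ∃ v : V, ‖v‖ = 1 ∧ ∀ t ∈ Icc a b, 0 < ⟪v, γ t⟫ := by
  obtain ⟨t₀, ht₀, -, -, hhalf⟩ :=
    exists_forall_angle_add_angle_le_half hab hc hclosed hsph (ne_top_of_lt h)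
  have hL : variationOnFromTo γ (Icc a b) a b < 2 * π := by
    rw [variationOnFromTo.eq_of_le _ _ hab, inter_self]
    exact ENNReal.toReal_lt_of_lt_ofReal h
  have hpos : ∀ t ∈ Icc a b, 0 < ⟪γ a + γ t₀, γ t⟫ := fun t ht =>
    inner_add_pos_of_angle_add_angle_lt_pi (hsph a (left_mem_Icc.mpr hab)) (hsph t₀ ht₀)
      (ne_zero_of_norm_ne_zero (by rw [hsph t ht]; exact one_ne_zero))
      (by linarith [hhalf t ht])
  have hne : γ a + γ t₀ ≠ 0 := fun h0 => by
    simpa [h0] using hpos a (left_mem_Icc.mpr hab)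
  refine ⟨‖γ a + γ t₀‖⁻¹ • (γ a + γ t₀), norm_smul_inv_norm hne, fun t ht => ?_⟩
  rw [real_inner_smul_left]
  exact mul_pos (inv_pos.mpr (norm_pos_iff.mpr hne)) (hpos t ht)

lemma exists_inner_nonneg_of_eVariationOn_le [FiniteDimensional ℝ V] (hV : 3 ≤ finrank ℝ V)
    (h : eVariationOn γ (Icc a b) ≤ ENNReal.ofReal (2 * π)) :
    ∃ v : V, ‖v‖ = 1 ∧ ∀ t ∈ Icc a b, 0 ≤ ⟪v, γ t⟫ := by
  have hf : BoundedVariationOn γ (Icc a b) := ne_top_of_le_ne_top ENNReal.ofReal_ne_top h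
  have ha : a ∈ Icc a b := left_mem_Icc.mpr hab
  have hb : b ∈ Icc a b := right_mem_Icc.mpr hab
  obtain ⟨t₀, ht₀, h₁, h₂, hhalf⟩ := exists_forall_angle_add_angle_le_half hab hc hclosed hsph hf
  have hL : variationOnFromTo γ (Icc a b) a b ≤ 2 * π := by
    rw [variationOnFromTo.eq_of_le _ _ hab, inter_self]
    exact ENNReal.toReal_le_of_le_ofReal (by positivity) h
  by_cases hpq : γ a + γ t₀ = 0
  · have hanti : γ t₀ = -γ a := eq_neg_of_add_eq_zero_right hpq
    obtain ⟨m, hm⟩ := exists_inner_nonneg_of_eq_neg_of_variationOnFromTo_le_pi isCompact_Icc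
      hf.locallyBoundedVariationOn hc hsph ha ht₀ ht₀.1 hanti (by linarith)
    obtain ⟨m', hm'⟩ := exists_inner_nonneg_of_eq_neg_of_variationOnFromTo_le_pi isCompact_Icc
      hf.locallyBoundedVariationOn hc hsph ht₀ hb ht₀.2 (by rw [← hclosed, hanti, neg_neg])
      (by linarith)
    obtain ⟨w, hw, hwp, hwm, hwm'⟩ := exists_norm_eq_one_inner_eq_zero_inner_nonneg hV (γ a) m m'
    refine ⟨w, hw, fun t ht => ?_⟩
    rcases le_total t t₀ with htt | htt
    · exact hm w hwp hwm t ⟨ht.1, htt⟩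
    · exact hm' w (by rw [hanti, inner_neg_right, hwp, neg_zero]) hwm' t ⟨htt, ht.2⟩
  · refine ⟨‖γ a + γ t₀‖⁻¹ • (γ a + γ t₀), norm_smul_inv_norm hpq, fun t ht => ?_⟩
    rw [real_inner_smul_left]
    exact mul_nonneg (by positivity) (inner_add_nonneg_of_angle_add_angle_le_pi (hsph a ha)
      (hsph t₀ ht₀) (by linarith [hhalf t ht]))

end ClosedCurve

theorem hemisphere_lemma (γ : ℝ → EuclideanSpace ℝ (Fin 3))
    (hcont : ContinuousOn γ (Set.Icc 0 1)) (hclosed : γ 0 = γ 1)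
    (hsphere : ∀ t ∈ Set.Icc (0:ℝ) 1, ‖γ t‖ = 1) :
    (eVariationOn γ (Set.Icc 0 1) < ENNReal.ofReal (2 * Real.pi) →
      ∃ v : EuclideanSpace ℝ (Fin 3), ‖v‖ = 1 ∧
        ∀ t ∈ Set.Icc (0:ℝ) 1, (0:ℝ) < inner ℝ v (γ t)) ∧
    (eVariationOn γ (Set.Icc 0 1) ≤ ENNReal.ofReal (2 * Real.pi) →
      ∃ v : EuclideanSpace ℝ (Fin 3), ‖v‖ = 1 ∧
        ∀ t ∈ Set.Icc (0:ℝ) 1, (0:ℝ) ≤ inner ℝ v (γ t)) :=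
  ⟨exists_inner_pos_of_eVariationOn_lt zero_le_one hcont hclosed hsphere,
    exists_inner_nonneg_of_eVariationOn_le zero_le_one hcont hclosed hsphere
      finrank_euclideanSpace_fin.ge⟩
end

section
/- Hopf–Rinow theorem for length spaces: Every complete, locally compact length metric space is proper, i.e. all of its closed bounded subsets are compact (equivalently, every closed ball is compact). -/
/-! Let `R` be the supremum of the radii `r` for which `closedBall x r` is compact. In a length
space `closedBall x (r + s)` lies in the closed `s`-neighbourhood of `closedBall x r`. Hence
`closedBall x R` is totally bounded, so compact by completeness; by local compactness some uniform
neighbourhood of it is compact, and that neighbourhood contains a strictly larger ball.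

The neighbourhood inclusion needs approximate division points of a pair at every ratio
`t ∈ [0, 1]`: iterated ε-midpoints provide them at dyadic ratios, and the property is closed
in `t`. -/

open Metric Set

def HasApproxDivisionPoints (X : Type*) [MetricSpace X] (t : ℝ) : Prop :=
  ∀ x z : X, ∀ ε > 0, ∃ y : X,
    dist x y ≤ t * dist x z + ε ∧ dist y z ≤ (1 - t) * dist x z + ε

namespace HasApproxDivisionPoints

variable {X : Type*} [MetricSpace X] {t : ℝ}

lemma zero : HasApproxDivisionPoints X 0 := fun x z ε hε =>
  ⟨x, by simpa using hε.le, by simpa using hε.le⟩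

lemma one_sub (h : HasApproxDivisionPoints X t) : HasApproxDivisionPoints X (1 - t) := by
  intro x z ε hε
  obtain ⟨y, hzy, hyx⟩ := h z x ε hε
  rw [dist_comm z x, dist_comm z y] at hzy
  rw [dist_comm z x, dist_comm y x] at hyx
  exact ⟨y, hyx, by rwa [sub_sub_cancel]⟩

lemma half (hlen : LengthMid X) (h : HasApproxDivisionPoints X t) (ht₀ : 0 ≤ t) (ht₁ : t ≤ 1) :
    HasApproxDivisionPoints X (t / 2) := by
  intro x z ε hε
  obtain ⟨m, hxm, hmz⟩ := hlen x z (ε / 3) (by positivity)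
  obtain ⟨y, hxy, hym⟩ := h x m (ε / 3) (by positivity)
  refine ⟨y, ?_, ?_⟩
  · calc dist x y ≤ t * dist x m + ε / 3 := hxy
      _ ≤ t * (dist x z / 2 + ε / 3) + ε / 3 := by gcongr
      _ ≤ t / 2 * dist x z + ε := by nlinarith
  · have ht₁' : 0 ≤ 1 - t := by linarith
    calc dist y z ≤ dist y m + dist m z := dist_triangle y m z
      _ ≤ (1 - t) * dist x m + ε / 3 + (dist x z / 2 + ε / 3) := add_le_add hym hmz
      _ ≤ (1 - t) * (dist x z / 2 + ε / 3) + ε / 3 + (dist x z / 2 + ε / 3) := by gcongr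
      _ ≤ (1 - t / 2) * dist x z + ε := by nlinarith

lemma isClosed_setOf : IsClosed {t : ℝ | HasApproxDivisionPoints X t} := by
  refine isClosed_of_closure_subset fun t ht x z ε hε => ?_
  set d := dist x z
  have hd : 0 ≤ d := dist_nonneg
  obtain ⟨s, hs, hts⟩ := Metric.mem_closure_iff.1 ht (ε / 2 / (d + 1)) (by positivity)
  obtain ⟨y, hxy, hyz⟩ := hs x z (ε / 2) (by positivity)
  have hts' : |t - s| * d ≤ ε / 2 := by
    rw [Real.dist_eq, lt_div_iff₀ (by positivity)] at hts
    nlinarith [abs_nonneg (t - s)]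
  refine ⟨y, ?_, ?_⟩
  · nlinarith [neg_abs_le (t - s)]
  · nlinarith [le_abs_self (t - s)]

end HasApproxDivisionPoints

/-- One binary digit at a time, the two halving maps reach a `2⁻ⁿ`-net of `[0, 1]` from `0`. -/
lemma Icc_zero_one_subset_of_isClosed_of_half_mem {S : Set ℝ} (hS : IsClosed S) (h₀ : (0 : ℝ) ∈ S)
    (hhalf : ∀ t ∈ S, t / 2 ∈ S ∧ (t + 1) / 2 ∈ S) : Icc 0 1 ⊆ S := by
  have approx : ∀ n : ℕ, ∀ t ∈ Icc (0 : ℝ) 1, ∃ s ∈ S, |t - s| ≤ (1 / 2) ^ n := by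
    intro n
    induction n with
    | zero => exact fun t ht => ⟨0, h₀, by rw [sub_zero, abs_of_nonneg ht.1]; simpa using ht.2⟩
    | succ n ih =>
      rintro t ⟨ht₀, ht₁⟩
      rcases le_or_gt t (1 / 2) with ht | ht
      · obtain ⟨s, hs, hts⟩ := ih (2 * t) ⟨by linarith, by linarith⟩
        refine ⟨s / 2, (hhalf s hs).1, ?_⟩
        rw [show t - s / 2 = (2 * t - s) / 2 by ring, abs_div, pow_succ]
        norm_num
        linarith
      · obtain ⟨s, hs, hts⟩ := ih (2 * t - 1) ⟨by linarith, by linarith⟩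
        refine ⟨(s + 1) / 2, (hhalf s hs).2, ?_⟩
        rw [show t - (s + 1) / 2 = (2 * t - 1 - s) / 2 by ring, abs_div, pow_succ]
        norm_num
        linarith
  intro t ht
  rw [← hS.closure_eq, Metric.mem_closure_iff]
  intro ε hε
  obtain ⟨n, hn⟩ := exists_pow_lt_of_lt_one hε (by norm_num : (1 / 2 : ℝ) < 1)
  obtain ⟨s, hs, hts⟩ := approx n t ht
  exact ⟨s, hs, (Real.dist_eq t s).trans_le hts |>.trans_lt hn⟩

lemma totallyBounded_of_forall_subset_cthickening {X : Type*} [MetricSpace X] {s : Set X}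
    (h : ∀ ε > 0, ∃ t, TotallyBounded t ∧ s ⊆ cthickening ε t) : TotallyBounded s := by
  rw [Metric.totallyBounded_iff]
  intro ε hε
  obtain ⟨t, ht, hst⟩ := h (ε / 3) (by positivity)
  obtain ⟨F, hF, htF⟩ := Metric.totallyBounded_iff.1 ht (ε / 3) (by positivity)
  refine ⟨F, hF, fun z hz => ?_⟩
  obtain ⟨w, hwt, hzw⟩ := mem_thickening_iff.1
    (cthickening_subset_thickening' (δ₂ := ε / 2) (by positivity) (by linarith) t (hst hz))
  obtain ⟨y, hyF, hwy⟩ := mem_iUnion₂.1 (htF hwt)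
  exact mem_iUnion₂.2 ⟨y, hyF, mem_ball.2 <| (dist_triangle z w y).trans_lt <| by
    linarith [mem_ball.1 hwy]⟩

namespace LengthMid

variable {X : Type*} [MetricSpace X]

lemma hasApproxDivisionPoints (hlen : LengthMid X) {t : ℝ} (ht : t ∈ Icc (0 : ℝ) 1) :
    HasApproxDivisionPoints X t := by
  set S := Icc 0 1 ∩ {t | HasApproxDivisionPoints X t}
  have hS : ∀ s ∈ S, s / 2 ∈ S ∧ (s + 1) / 2 ∈ S := by
    rintro s ⟨⟨hs₀, hs₁⟩, hs⟩
    refine ⟨⟨⟨by linarith, by linarith⟩, hs.half hlen hs₀ hs₁⟩, ⟨by linarith, by linarith⟩, ?_⟩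
    show HasApproxDivisionPoints X ((s + 1) / 2)
    convert (hs.one_sub.half hlen (by linarith) (by linarith)).one_sub using 2
    ring
  exact (Icc_zero_one_subset_of_isClosed_of_half_mem
    (isClosed_Icc.inter HasApproxDivisionPoints.isClosed_setOf)
    ⟨⟨le_rfl, zero_le_one⟩, HasApproxDivisionPoints.zero⟩ hS ht).2

lemma closedBall_add_subset_cthickening (hlen : LengthMid X) {x : X} {r s : ℝ} (hr : 0 ≤ r) :
    closedBall x (r + s) ⊆ cthickening s (closedBall x r) := by
  intro z hz
  rw [mem_closedBall] at hz
  rw [cthickening_eq_iInter_cthickening, mem_iInter₂]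
  intro δ (hδ : s < δ)
  obtain ⟨ε, hε, rfl⟩ : ∃ ε > 0, δ = s + 2 * ε := ⟨(δ - s) / 2, by linarith, by ring⟩
  rcases le_or_gt (dist z x) r with hzx | hzx
  · exact self_subset_cthickening _ (mem_closedBall.2 hzx)
  rcases le_or_gt r ε with hrε | hεr
  · exact mem_cthickening_of_dist_le z x _ _ (mem_closedBall_self hr) (by linarith)
  have hd : 0 < dist x z := by rw [dist_comm]; linarith
  obtain ⟨y, hxy, hyz⟩ := hlen.hasApproxDivisionPoints
    (t := (r - ε) / dist x z) ⟨by positivity, by rw [div_le_one hd, dist_comm]; linarith⟩ x z ε hε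
  rw [div_mul_cancel₀ _ hd.ne'] at hxy
  rw [sub_mul, div_mul_cancel₀ _ hd.ne', one_mul, dist_comm x z] at hyz
  refine mem_cthickening_of_dist_le z y _ _ (mem_closedBall'.2 (by linarith)) ?_
  rw [dist_comm]
  linarith

lemma isCompact_closedBall_of_forall_lt [CompleteSpace X] (hlen : LengthMid X) {x : X} {R : ℝ}
    (h : ∀ r < R, IsCompact (closedBall x r)) :
    IsCompact (closedBall x R) := by
  rcases le_or_gt R 0 with hR | hR
  · exact (subsingleton_closedBall x hR).isCompact
  refine (totallyBounded_of_forall_subset_cthickening fun ε hε => ?_).isCompact_of_isClosed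
    isClosed_closedBall
  set δ := min ε R
  have hδ : 0 < δ := lt_min hε hR
  refine ⟨closedBall x (R - δ), (h _ (by linarith)).totallyBounded, ?_⟩
  calc closedBall x R = closedBall x (R - δ + δ) := by rw [sub_add_cancel]
    _ ⊆ cthickening δ (closedBall x (R - δ)) :=
        hlen.closedBall_add_subset_cthickening (by linarith [min_le_right ε R])
    _ ⊆ cthickening ε (closedBall x (R - δ)) := cthickening_mono (min_le_left ε R) _

end LengthMid

theorem hopf_rinow_proper {X : Type*} [MetricSpace X] [CompleteSpace X]
    [LocallyCompactSpace X] (hlen : LengthMid X) :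
    ProperSpace X := by
  refine ⟨fun x r => ?_⟩
  by_contra hr
  set A := {s : ℝ | IsCompact (closedBall x s)}
  have hA_lower : IsLowerSet A := fun s t hts hs =>
    hs.of_isClosed_subset isClosed_closedBall (closedBall_subset_closedBall hts)
  have hA_bdd : BddAbove A := ⟨r, fun s hs => not_lt.1 fun hrs => hr (hA_lower hrs.le hs)⟩
  obtain ⟨r₀, hr₀, hr₀A⟩ := exists_isCompact_closedBall x
  have hR : 0 ≤ sSup A := hr₀.le.trans (le_csSup hA_bdd hr₀A)
  have hRA : sSup A ∈ A := hlen.isCompact_closedBall_of_forall_lt fun s hs =>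
    let ⟨t, ht, hst⟩ := exists_lt_of_lt_csSup ⟨r₀, hr₀A⟩ hs
    hA_lower hst.le ht
  obtain ⟨δ, hδ, hcomp⟩ := hRA.exists_isCompact_cthickening
  have hbigger : sSup A + δ ∈ A :=
    hcomp.of_isClosed_subset isClosed_closedBall (hlen.closedBall_add_subset_cthickening hR)
  linarith [le_csSup hA_bdd hbigger]
end

section
/- Geodesics do not split (non-bifurcation) in spaces with lower curvature bound, κ = 0 case: Let L be a complete length metric space satisfying the CBB(0) comparison. Let 0 < a ≤ b and let γ₁, γ₂ : ℝ → L be unit-speed geodesics, i.e. dist(γ₁(s), γ₁(t)) = |s − t| for all s, t ∈ [0,a] and dist(γ₂(s), γ₂(t)) = |s − t| for all s, t ∈ [0,b]. If there is ε > 0 such that γ₁(t) = γ₂(t) for all t ∈ [0,ε], then γ₁(t) = γ₂(t) for all t ∈ [0,a] (one geodesic is contained in the other). -/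
theorem geodesics_do_not_split_CBB0 {L : Type*} [MetricSpace L] [CompleteSpace L]
    (hlen : LengthMid L) (hcbb : CBB0Cmp L)
    (a b : ℝ) (ha : 0 < a) (hab : a ≤ b)
    (γ₁ γ₂ : ℝ → L)
    (h₁ : ∀ s ∈ Set.Icc 0 a, ∀ t ∈ Set.Icc 0 a, dist (γ₁ s) (γ₁ t) = |s - t|)
    (h₂ : ∀ s ∈ Set.Icc 0 b, ∀ t ∈ Set.Icc 0 b, dist (γ₂ s) (γ₂ t) = |s - t|)
    (ε : ℝ) (hε : 0 < ε) (heq : ∀ t ∈ Set.Icc 0 ε, γ₁ t = γ₂ t) :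
    ∀ t ∈ Set.Icc 0 a, γ₁ t = γ₂ t := by

  intro t ht
  obtain ⟨ht0, hta⟩ := ht
  by_cases htε : t ≤ ε
  · exact heq t ⟨ht0, htε⟩
  push_neg at htε
  set c : ℝ := ε / 2 with hc
  have hc0 : 0 < c := by positivity
  have hcε : c < ε := by simp [hc]; linarith
  have hct : c < t := lt_trans hcε htε
  have hcb : c ≤ b := by linarith
  have hca : c ≤ a := by linarith
  have htb : t ≤ b := le_trans hta hab
  have hγc : γ₁ c = γ₂ c := heq c ⟨le_of_lt hc0, le_of_lt hcε⟩
  have hγ0 : γ₁ 0 = γ₂ 0 := heq 0 ⟨le_refl _, le_of_lt hε⟩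
  set p : L := γ₁ c with hp
  -- distances
  have d1 : dist p (γ₁ 0) = c := by
    rw [hp, h₁ c ⟨le_of_lt hc0, hca⟩ 0 ⟨le_refl _, le_of_lt ha⟩]
    rw [sub_zero, abs_of_pos hc0]
  have d2 : dist p (γ₁ t) = t - c := by
    rw [hp, h₁ c ⟨le_of_lt hc0, hca⟩ t ⟨ht0, hta⟩, abs_of_neg (by linarith), neg_sub]
  have d3 : dist (γ₁ 0) (γ₁ t) = t := by
    rw [h₁ 0 ⟨le_refl _, le_of_lt ha⟩ t ⟨ht0, hta⟩, zero_sub, abs_neg,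
      abs_of_nonneg ht0]
  have d4 : dist p (γ₂ t) = t - c := by
    rw [hγc, h₂ c ⟨le_of_lt hc0, hcb⟩ t ⟨ht0, htb⟩, abs_of_neg (by linarith), neg_sub]
  have d5 : dist (γ₂ t) (γ₁ 0) = t := by
    rw [hγ0, h₂ t ⟨ht0, htb⟩ 0 ⟨le_refl _, by linarith⟩, sub_zero, abs_of_nonneg ht0]
  have htc : (0:ℝ) < t - c := by linarith
  -- degenerate angles are π
  have a1 : cmpAngle p (γ₁ 0) (γ₁ t) = Real.pi := by
    unfold cmpAngle
    rw [d1, d2, d3]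
    have : (c ^ 2 + (t - c) ^ 2 - t ^ 2) / (2 * c * (t - c)) = -1 := by
      field_simp
      ring
    rw [this, Real.arccos_neg_one]
  have a3 : cmpAngle p (γ₂ t) (γ₁ 0) = Real.pi := by
    unfold cmpAngle
    rw [d4, d1, d5]
    have : ((t - c) ^ 2 + c ^ 2 - t ^ 2) / (2 * (t - c) * c) = -1 := by
      field_simp
      ring
    rw [this, Real.arccos_neg_one]
  -- distinctness
  have n1 : p ≠ γ₁ 0 := by
    intro h; rw [h] at d1; simp at d1; linarith
  have n2 : p ≠ γ₁ t := by
    intro h; rw [h] at d2; simp at d2; linarith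
  have n3 : p ≠ γ₂ t := by
    intro h; rw [h] at d4; simp at d4; linarith
  have hsum := hcbb p (γ₁ 0) (γ₁ t) (γ₂ t) n1 n2 n3
  rw [a1, a3] at hsum
  have hle0 : cmpAngle p (γ₁ t) (γ₂ t) ≤ 0 := by linarith
  have hge0 : 0 ≤ cmpAngle p (γ₁ t) (γ₂ t) := Real.arccos_nonneg _
  have h0 : cmpAngle p (γ₁ t) (γ₂ t) = 0 := le_antisymm hle0 hge0
  unfold cmpAngle at h0
  rw [Real.arccos_eq_zero] at h0
  rw [d2, d4] at h0
  have hd : dist (γ₁ t) (γ₂ t) ^ 2 ≤ 0 := by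
    have h2tc : (0:ℝ) < 2 * (t - c) * (t - c) := by positivity
    rw [le_div_iff₀ h2tc] at h0
    nlinarith
  have : dist (γ₁ t) (γ₂ t) = 0 := by
    nlinarith [dist_nonneg (x := γ₁ t) (y := γ₂ t)]
  exact dist_eq_zero.mp this
end
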